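/- arXiv:2503.03554 — 5 statements merged into one kernel-verified Lean document; each statement's English description precedes it below -/
import Mathlib

section
/- Fix x₀ ∈ ℝ^N and set q(x) = √2 · d(x, x₀). Let x ∈ ℝ^N satisfy x ≠ 0, x ≠ x₀, and ‖x‖‖x₀‖ + ⟨x, x₀⟩ > 0. Then q is differentiable at x and ‖∇q(x)‖ = 1/√(2‖x‖). Moreover q(x₀) = 0; that is, √2 d(·, x₀) solves the eikonal equation |∇q(x)| = 1/√(2|x|) with q(x₀) = 0. -/
/-- The metric `d(x,y) = sqrt(‖x‖ + ‖y‖ − sqrt(2(‖x‖‖y‖ + ⟨x,y⟩)))` of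
`(k,1)`-generalized Fourier analysis. -/
noncomputable def dkOne {N : ℕ} (x y : EuclideanSpace ℝ (Fin N)) : ℝ :=
  Real.sqrt (‖x‖ + ‖y‖ - Real.sqrt (2 * (‖x‖ * ‖y‖ + (inner ℝ x y : ℝ))))

/-
Write `d(x, x₀)² = ‖x‖ + ‖x₀‖ - s(x)` with `s(x) = √(2(‖x‖‖x₀‖ + ⟪x, x₀⟫))`. Where `x ≠ 0` and
`s(x) > 0` this is differentiable with gradient `((s - ‖x₀‖) / (‖x‖ s)) x - s⁻¹ x₀`, and
eliminating `⟪x, x₀⟫` through `s²` shows that this gradient has squared norm `d² / ‖x‖`.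
Since `d² (‖x‖ + ‖x₀‖ + s) = ‖x - x₀‖²`, we have `d² > 0` for `x ≠ x₀`, so the chain rule for
`√` applies and gives `‖∇q‖² = 2 · (d² / ‖x‖) / (4 d²) = 1 / (2‖x‖)`.
-/

open Real InnerProductSpace

open scoped RealInnerProductSpace

section

variable {E : Type*} [NormedAddCommGroup E] [InnerProductSpace ℝ E]

theorem hasFDerivAt_norm {x : E} (hx : x ≠ 0) :
    HasFDerivAt (‖·‖) (‖x‖⁻¹ • innerSL ℝ x) x := by
  have h := (hasStrictFDerivAt_norm_sq x).hasFDerivAt.sqrt (by positivity)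
  simp only [sqrt_sq (norm_nonneg _)] at h
  convert h using 1
  ext v
  simp only [smul_apply, coe_innerSL_apply, smul_eq_mul, nsmul_eq_mul, Nat.cast_ofNat]
  field_simp

noncomputable def dkCross (x y : E) : ℝ :=
  √(2 * (‖x‖ * ‖y‖ + ⟪x, y⟫))

/-- On `EuclideanSpace ℝ (Fin N)`, `dkOne x y = √(dkSq x y)` holds by `rfl`. -/
noncomputable def dkSq (x y : E) : ℝ :=
  ‖x‖ + ‖y‖ - dkCross x y

theorem dkCross_sq (x y : E) : dkCross x y ^ 2 = 2 * (‖x‖ * ‖y‖ + ⟪x, y⟫) :=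
  sq_sqrt (by nlinarith [neg_le_of_abs_le (abs_real_inner_le_norm x y)])

theorem dkSq_mul_eq_norm_sub_sq (x y : E) :
    dkSq x y * (‖x‖ + ‖y‖ + dkCross x y) = ‖x - y‖ ^ 2 := by
  rw [norm_sub_sq_real, dkSq]
  linear_combination -dkCross_sq x y

theorem dkSq_pos {x y : E} (h : x ≠ y) : 0 < dkSq x y := by
  have hxy : 0 < ‖x - y‖ ^ 2 := pow_pos (norm_pos_iff.2 (sub_ne_zero.2 h)) 2
  rw [← dkSq_mul_eq_norm_sub_sq] at hxy
  exact pos_of_mul_pos_left hxy (by unfold dkCross; positivity)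

theorem dkSq_self (x : E) : dkSq x x = 0 := by
  rw [dkSq, dkCross, real_inner_self_eq_norm_mul_norm,
    show 2 * (‖x‖ * ‖x‖ + ‖x‖ * ‖x‖) = (2 * ‖x‖) ^ 2 by ring, sqrt_sq (by positivity)]
  ring

theorem norm_sq_gradient_dkSq {x x₀ : E} (hx : x ≠ 0) (hs : dkCross x x₀ ≠ 0) :
    ‖((dkCross x x₀ - ‖x₀‖) / (‖x‖ * dkCross x x₀)) • x - (dkCross x x₀)⁻¹ • x₀‖ ^ 2 =
      dkSq x x₀ / ‖x‖ := by
  have hr : ‖x‖ ≠ 0 := norm_ne_zero_iff.2 hx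
  have hinner : ⟪x, x₀⟫ = dkCross x x₀ ^ 2 / 2 - ‖x‖ * ‖x₀‖ := by
    linear_combination -(dkCross_sq x x₀) / 2
  rw [norm_sub_sq_real, norm_smul, norm_smul, real_inner_smul_left, real_inner_smul_right,
    hinner, dkSq]
  simp only [norm_eq_abs, mul_pow, sq_abs]
  field_simp
  ring

variable [CompleteSpace E]

theorem HasGradientAt.const_mul {f : E → ℝ} {f' x : E} (c : ℝ) (hf : HasGradientAt f f' x) :
    HasGradientAt (fun y => c * f y) (c • f') x := by
  rw [hasGradientAt_iff_hasFDerivAt] at hf ⊢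
  simpa using hf.const_mul c

theorem HasGradientAt.sqrt {f : E → ℝ} {f' x : E} (hf : HasGradientAt f f' x) (hx : f x ≠ 0) :
    HasGradientAt (fun y => √(f y)) ((2 * √(f x))⁻¹ • f') x := by
  rw [hasGradientAt_iff_hasFDerivAt] at hf ⊢
  simpa using hf.sqrt hx

theorem hasGradientAt_dkSq {x x₀ : E} (hx : x ≠ 0) (hpos : 0 < ‖x‖ * ‖x₀‖ + ⟪x, x₀⟫) :
    HasGradientAt (dkSq · x₀)
      (((dkCross x x₀ - ‖x₀‖) / (‖x‖ * dkCross x x₀)) • x - (dkCross x x₀)⁻¹ • x₀) x := by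
  have hinner : HasFDerivAt (⟪·, x₀⟫) (innerSL ℝ x₀) x :=
    (innerSL ℝ x₀).hasFDerivAt.congr_of_eventuallyEq
      (.of_forall fun y => real_inner_comm x₀ y)
  have hcross := ((((hasFDerivAt_norm hx).mul_const ‖x₀‖).add hinner).const_mul 2).sqrt
    (by positivity)
  have hs : dkCross x x₀ ≠ 0 := (sqrt_pos.2 (by positivity)).ne'
  have hdual : toDual ℝ E
      (((dkCross x x₀ - ‖x₀‖) / (‖x‖ * dkCross x x₀)) • x - (dkCross x x₀)⁻¹ • x₀) =
      ‖x‖⁻¹ • innerSL ℝ x - (1 / (2 * dkCross x x₀)) •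
        (2 : ℝ) • (‖x₀‖ • ‖x‖⁻¹ • innerSL ℝ x + innerSL ℝ x₀) := by
    ext v
    simp only [map_sub, map_smul, toDual_apply_apply, sub_apply, smul_apply, add_apply,
      coe_innerSL_apply, smul_eq_mul]
    field_simp
    ring
  rw [hasGradientAt_iff_hasFDerivAt, hdual]
  exact ((hasFDerivAt_norm hx).add_const ‖x₀‖).sub hcross

end

/-- `q = √2 · d(·, x₀)` solves the eikonal equation
`|∇q(x)| = 1/√(2|x|)` with `q(x₀) = 0`. -/
theorem statement2 (N : ℕ) (x₀ : EuclideanSpace ℝ (Fin N))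
    (q : EuclideanSpace ℝ (Fin N) → ℝ)
    (hq : ∀ z, q z = Real.sqrt 2 * dkOne z x₀)
    (x : EuclideanSpace ℝ (Fin N)) (hx : x ≠ 0) (hxx0 : x ≠ x₀)
    (hpos : 0 < ‖x‖ * ‖x₀‖ + (inner ℝ x x₀ : ℝ)) :
    DifferentiableAt ℝ q x ∧ ‖gradient q x‖ = 1 / Real.sqrt (2 * ‖x‖) ∧ q x₀ = 0 := by
  obtain rfl : q = fun z => √2 * √(dkSq z x₀) := funext hq
  have hu := dkSq_pos hxx0
  have hs : dkCross x x₀ ≠ 0 := (sqrt_pos.2 (by positivity)).ne'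
  have hgrad := ((hasGradientAt_dkSq hx hpos).sqrt hu.ne').const_mul √2
  have hnorm := congrArg sqrt (norm_sq_gradient_dkSq hx hs)
  rw [sqrt_sq (norm_nonneg _)] at hnorm
  refine ⟨hgrad.differentiableAt, ?_, by simp [dkSq_self]⟩
  rw [hgrad.gradient, norm_smul, norm_smul, hnorm, norm_inv, norm_of_nonneg (by positivity),
    norm_of_nonneg (by positivity), sqrt_div hu.le, sqrt_mul zero_le_two]
  field_simp
  exact sq_sqrt zero_le_two
end

section
/- Let N ≥ 1, let x₀, x ∈ ℝ^N \ {0}, and let γ : [0,1] → ℝ^N \ {0} be a piecewise continuously differentiable curve with γ(0) = x₀ and γ(1) = x. Then ∫₀¹ ‖γ′(t)‖ / √(2‖γ(t)‖) dt ≥ √2 · d(x, x₀). (That is, √2 d is a lower bound for the length of any curve avoiding the origin, measured in the conformal metric with density 1/√(2|x|); equivalently, √2 d(x, x₀) ≤ L(x, x₀), the Riemannian distance determined by the coefficient 1/√(2|x|).) -/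
/-- `γ` is piecewise continuously differentiable on `[0,1]`: it is continuous there and
there is a partition `0 = p 0 < p 1 < ⋯ < p n = 1` such that `γ` is `C¹` on each piece. -/
def PiecewiseC1 {N : ℕ} (γ : ℝ → EuclideanSpace ℝ (Fin N)) : Prop :=
  ContinuousOn γ (Set.Icc 0 1) ∧
    ∃ (n : ℕ) (p : Fin (n + 1) → ℝ), StrictMono p ∧ p 0 = 0 ∧ p (Fin.last n) = 1 ∧
      ∀ i : Fin n, ContDiffOn ℝ 1 γ (Set.Icc (p i.castSucc) (p i.succ))

open Real Set MeasureTheory RealInnerProductSpace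

/-- `h` is `A² / a + B² / b ≤ K / (a + b)` with the denominators cleared, which still carries
information when `a` or `b` vanishes. -/
theorem sq_div_add_sq_div_le {a b A B K ε : ℝ} (ha : 0 ≤ a) (hb : 0 ≤ b) (hab : 0 < a + b)
    (hε : 0 < ε) (hK : (A - B) ^ 2 ≤ K) (h : (a + b) * (A ^ 2 * b + B ^ 2 * a) ≤ a * b * K) :
    A ^ 2 / (a + ε) + B ^ 2 / (b + ε) ≤ K / (a + b) := by
  have eq_zero_of_sq_mul_sq_nonpos {C c : ℝ} (hc : 0 < c) (hCc : (C * c) ^ 2 ≤ 0) : C = 0 := by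
    have : C * c = 0 := pow_eq_zero_iff two_ne_zero |>.1 (le_antisymm hCc (sq_nonneg _))
    exact (mul_eq_zero.1 this).resolve_right hc.ne'
  rcases ha.eq_or_lt with rfl | ha
  · obtain rfl : A = 0 := eq_zero_of_sq_mul_sq_nonpos (c := b) (by linarith) (by nlinarith)
    simp only [zero_add, zero_sub, neg_sq, ne_eq, OfNat.ofNat_ne_zero, not_false_eq_true,
      zero_pow, zero_div] at hab hK ⊢
    exact (div_le_div_of_nonneg_left (sq_nonneg B) hab (by linarith)).trans
      (div_le_div_of_nonneg_right hK hab.le)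
  rcases hb.eq_or_lt with rfl | hb
  · obtain rfl : B = 0 := eq_zero_of_sq_mul_sq_nonpos (c := a) ha (by nlinarith)
    simp only [add_zero, zero_add, sub_zero, ne_eq, OfNat.ofNat_ne_zero, not_false_eq_true,
      zero_pow, zero_div] at hK ⊢
    exact (div_le_div_of_nonneg_left (sq_nonneg A) ha (by linarith)).trans
      (div_le_div_of_nonneg_right hK ha.le)
  calc A ^ 2 / (a + ε) + B ^ 2 / (b + ε) ≤ A ^ 2 / a + B ^ 2 / b := by
        gcongr <;> linarith
    _ ≤ K / (a + b) := by
        rw [div_add_div _ _ ha.ne' hb.ne', div_le_div_iff₀ (by positivity) hab]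
        linarith

theorem abs_mul_add_mul_le_sqrt {c₁ c₂ : ℝ} (hc : c₁ ^ 2 + c₂ ^ 2 = 1) (X Y : ℝ) :
    |c₁ * X + c₂ * Y| ≤ √(X ^ 2 + Y ^ 2) :=
  abs_le_sqrt (by nlinarith [sq_nonneg (c₁ * Y - c₂ * X)])

/-- The derivative of `c₁ √(‖y‖ + ⟪e, y⟫ + ε) + c₂ √(‖y‖ - ⟪e, y⟫ + ε)` in the direction `w`,
written with `r = ‖y‖`, `p = ⟪e, y⟫`, `q = ⟪y, w⟫`, `m = ⟪e, w⟫`, `n = ‖w‖`. -/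
theorem abs_sqrtCoord_deriv_le {r p q m n ε c₁ c₂ : ℝ} (hr : 0 < r) (hp : |p| ≤ r)
    (hε : 0 < ε) (hmn : |m| ≤ n) (hcs : (q - p * m) ^ 2 ≤ (r ^ 2 - p ^ 2) * (n ^ 2 - m ^ 2))
    (hc : c₁ ^ 2 + c₂ ^ 2 = 1) :
    |c₁ * ((q / r + m) / (2 * √(r + p + ε))) + c₂ * ((q / r - m) / (2 * √(r - p + ε)))|
      ≤ n / √(2 * r) := by
  obtain ⟨hp₁, hp₂⟩ := abs_le.1 hp
  have hn : 0 ≤ n := (abs_nonneg m).trans hmn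
  have hsq {a : ℝ} (ha : 0 ≤ a) (A : ℝ) : (A / (2 * √(a + ε))) ^ 2 = A ^ 2 / (a + ε) / 4 := by
    rw [div_pow, mul_pow, sq_sqrt (by linarith), div_div, mul_comm]
    norm_num
  have hsum : (q / r + m) ^ 2 / (r + p + ε) + (q / r - m) ^ 2 / (r - p + ε)
      ≤ 4 * n ^ 2 / (r + p + (r - p)) := by
    refine sq_div_add_sq_div_le (by linarith) (by linarith) (by linarith) hε ?_ ?_
    · nlinarith [sq_abs m, abs_nonneg m]
    · rw [← div_mul_cancel₀ q hr.ne'] at hcs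
      linear_combination 4 * hcs
  calc _ ≤ √(((q / r + m) / (2 * √(r + p + ε))) ^ 2 + ((q / r - m) / (2 * √(r - p + ε))) ^ 2) :=
        abs_mul_add_mul_le_sqrt hc _ _
    _ ≤ √(n ^ 2 / (2 * r)) := by
        gcongr
        rw [hsq (by linarith), hsq (by linarith)]
        calc _ = ((q / r + m) ^ 2 / (r + p + ε) + (q / r - m) ^ 2 / (r - p + ε)) / 4 := by ring
          _ ≤ 4 * n ^ 2 / (r + p + (r - p)) / 4 := by gcongr
          _ = n ^ 2 / (2 * r) := by ring
    _ = n / √(2 * r) := by rw [sqrt_div' _ (by positivity), sqrt_sq hn]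

section InnerProductSpace

variable {E : Type*} [NormedAddCommGroup E] [InnerProductSpace ℝ E]

theorem inner_sub_inner_mul_inner_sq_le {e : E} (he : ‖e‖ = 1) (y w : E) :
    (⟪y, w⟫ - ⟪e, y⟫ * ⟪e, w⟫) ^ 2 ≤ (‖y‖ ^ 2 - ⟪e, y⟫ ^ 2) * (‖w‖ ^ 2 - ⟪e, w⟫ ^ 2) := by
  have hee : ⟪e, e⟫ = 1 := by rw [real_inner_self_eq_norm_sq, he, one_pow]
  have key := real_inner_mul_inner_self_le (y - ⟪e, y⟫ • e) (w - ⟪e, w⟫ • e)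
  simp only [inner_sub_left, inner_sub_right, real_inner_smul_left, real_inner_smul_right,
    real_inner_self_eq_norm_sq, hee, real_inner_comm e, norm_smul, he, mul_one,
    Real.norm_eq_abs, sq_abs] at key
  linear_combination key

theorem hasFDerivAt_norm_of_ne_zero {y : E} (hy : y ≠ 0) :
    HasFDerivAt (‖·‖) (‖y‖⁻¹ • innerSL ℝ y) y := by
  have hsq := (hasStrictFDerivAt_norm_sq y).hasFDerivAt.sqrt (by positivity)
  simp only [sqrt_sq (norm_nonneg _)] at hsq
  convert hsq using 1
  ext w
  have : ‖y‖ ≠ 0 := norm_ne_zero_iff.2 hy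
  simp only [smul_apply, coe_innerSL_apply, smul_eq_mul, one_div, mul_inv_rev, nsmul_eq_mul,
    Nat.cast_ofNat]
  field_simp

noncomputable def sqrtCoord (e : E) (ε : ℝ) (y : E) : ℝ := √(‖y‖ + ⟪e, y⟫ + ε)

theorem hasFDerivAt_sqrtCoord {e y : E} {ε : ℝ} (hy : y ≠ 0) (hpos : 0 < ‖y‖ + ⟪e, y⟫ + ε) :
    HasFDerivAt (sqrtCoord e ε)
      ((1 / (2 * sqrtCoord e ε y)) • (‖y‖⁻¹ • innerSL ℝ y + innerSL ℝ e)) y :=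
  (((hasFDerivAt_norm_of_ne_zero hy).add (innerSL ℝ e).hasFDerivAt).add_const ε).sqrt hpos.ne'

theorem abs_inner_le_norm_of_norm_eq_one {e : E} (he : ‖e‖ = 1) (y : E) : |⟪e, y⟫| ≤ ‖y‖ := by
  simpa [he] using abs_real_inner_le_norm e y

theorem exists_hasFDerivAt_sqrtCoord_comb {e y : E} {ε c₁ c₂ : ℝ} (he : ‖e‖ = 1) (hε : 0 < ε)
    (hc : c₁ ^ 2 + c₂ ^ 2 = 1) (hy : y ≠ 0) :
    ∃ f' : E →L[ℝ] ℝ, HasFDerivAt (fun z ↦ c₁ * sqrtCoord e ε z + c₂ * sqrtCoord (-e) ε z) f' y ∧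
      ‖f'‖ ≤ (√(2 * ‖y‖))⁻¹ := by
  have hp := abs_le.1 (abs_inner_le_norm_of_norm_eq_one he y)
  have hpos₁ : 0 < ‖y‖ + ⟪e, y⟫ + ε := by linarith
  have hpos₂ : 0 < ‖y‖ + ⟪-e, y⟫ + ε := by rw [inner_neg_left]; linarith
  refine ⟨_, ((hasFDerivAt_sqrtCoord hy hpos₁).const_mul c₁).add
    ((hasFDerivAt_sqrtCoord hy hpos₂).const_mul c₂), ContinuousLinearMap.opNorm_le_bound _
    (by positivity) fun w ↦ ?_⟩
  have := abs_sqrtCoord_deriv_le (norm_pos_iff.2 hy) (abs_inner_le_norm_of_norm_eq_one he y) hε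
    (abs_inner_le_norm_of_norm_eq_one he w) (inner_sub_inner_mul_inner_sq_le he y w) hc
  convert this using 1
  · simp only [sqrtCoord, inner_neg_left, ← sub_eq_add_neg, Real.norm_eq_abs,
      add_apply, smul_apply, innerSL_apply_apply, smul_eq_mul]
    ring_nf
  · ring

theorem integrableOn_norm_deriv_mul {γ : ℝ → E} {ψ : ℝ → ℝ} {a b : ℝ} (hab : a < b)
    (hγ : ContDiffOn ℝ 1 γ (Icc a b)) (hψ : ContinuousOn ψ (Icc a b)) :
    IntegrableOn (fun t ↦ ‖deriv γ t‖ * ψ t) (Icc a b) := by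
  have hγ' := hγ.continuousOn_derivWithin (uniqueDiffOn_Icc hab) le_rfl
  rw [integrableOn_Icc_iff_integrableOn_Ioo]
  refine ((hγ'.norm.mul hψ).integrableOn_Icc.mono_set Ioo_subset_Icc_self).congr_fun
    (fun t ht ↦ ?_) measurableSet_Ioo
  simp only [Pi.mul_apply, derivWithin_of_mem_nhds (Icc_mem_nhds ht.1 ht.2)]

theorem sub_le_integral_norm_deriv_mul {U : Set E} {f ρ : E → ℝ} {γ : ℝ → E} {a b : ℝ}
    (hab : a < b) (hγ : ContDiffOn ℝ 1 γ (Icc a b)) (hγU : MapsTo γ (Icc a b) U)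
    (hf : ∀ y ∈ U, ∃ f' : E →L[ℝ] ℝ, HasFDerivAt f f' y ∧ ‖f'‖ ≤ ρ y) (hρ : ContinuousOn ρ U) :
    f (γ b) - f (γ a) ≤ ∫ t in a..b, ‖deriv γ t‖ * ρ (γ t) := by
  choose! f' hf' hf'ρ using hf
  refine intervalIntegral.sub_le_integral_of_hasDeriv_right_of_le (g := f ∘ γ)
    (g' := fun t ↦ f' (γ t) (deriv γ t)) hab.le
    (fun t ht ↦ (hf' _ (hγU ht)).continuousAt.comp_continuousWithinAt (hγ.continuousOn t ht))
    (fun t ht ↦ ?_) (integrableOn_norm_deriv_mul hab hγ (hρ.comp hγ.continuousOn hγU))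
    (fun t ht ↦ ?_)
  · have hγt : HasDerivAt γ (deriv γ t) t :=
      ((hγ.contDiffAt (Icc_mem_nhds ht.1 ht.2)).differentiableAt one_ne_zero).hasDerivAt
    exact ((hf' _ (hγU (Ioo_subset_Icc_self ht))).comp_hasDerivAt t hγt).hasDerivWithinAt
  · have hy := hγU (Ioo_subset_Icc_self ht)
    calc f' (γ t) (deriv γ t) ≤ ‖f' (γ t)‖ * ‖deriv γ t‖ :=
          (Real.le_norm_self _).trans (ContinuousLinearMap.le_opNorm _ _)
      _ ≤ ‖deriv γ t‖ * ρ (γ t) := by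
        rw [mul_comm]; exact mul_le_mul_of_nonneg_left (hf'ρ _ hy) (norm_nonneg _)

end InnerProductSpace

theorem sub_le_integral_of_partition {g φ : ℝ → ℝ} {n : ℕ} {p : Fin (n + 1) → ℝ}
    (h : ∀ i : Fin n, IntervalIntegrable φ volume (p i.castSucc) (p i.succ) ∧
      g (p i.succ) - g (p i.castSucc) ≤ ∫ t in p i.castSucc..p i.succ, φ t) :
    g (p (Fin.last n)) - g (p 0) ≤ ∫ t in p 0..p (Fin.last n), φ t := by
  suffices ∀ i : Fin (n + 1), IntervalIntegrable φ volume (p 0) (p i) ∧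
      g (p i) - g (p 0) ≤ ∫ t in p 0..p i, φ t from (this _).2
  refine Fin.induction (by simp) fun i ⟨hint, hle⟩ ↦ ?_
  obtain ⟨hint', hle'⟩ := h i
  refine ⟨hint.trans hint', ?_⟩
  rw [← intervalIntegral.integral_add_adjacent_intervals hint hint']
  linarith

theorem sqrt_sq_add_sq_le_of_forall {a b I : ℝ}
    (h : ∀ c₁ c₂ : ℝ, c₁ ^ 2 + c₂ ^ 2 = 1 → c₁ * a + c₂ * b ≤ I) : √(a ^ 2 + b ^ 2) ≤ I := by
  rcases (sqrt_nonneg (a ^ 2 + b ^ 2)).eq_or_lt with hm | hm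
  · have h₁ := h 1 0 (by norm_num)
    have h₂ := h (-1) 0 (by norm_num)
    rw [← hm]
    linarith
  have hm2 : √(a ^ 2 + b ^ 2) ^ 2 = a ^ 2 + b ^ 2 := sq_sqrt (by positivity)
  set m := √(a ^ 2 + b ^ 2)
  calc m = a / m * a + b / m * b := by
        rw [div_mul_eq_mul_div, div_mul_eq_mul_div, ← add_div, ← sq, ← sq, ← hm2, sq,
          mul_self_div_self]
    _ ≤ I := h _ _ (by rw [div_pow, div_pow, ← add_div, ← hm2, div_self (pow_pos hm 2).ne'])

theorem PiecewiseC1.sub_le_integral {N : ℕ} {γ : ℝ → EuclideanSpace ℝ (Fin N)}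
    (hγ : PiecewiseC1 γ) {U : Set (EuclideanSpace ℝ (Fin N))} {f ρ : EuclideanSpace ℝ (Fin N) → ℝ}
    (hγU : MapsTo γ (Icc 0 1) U)
    (hf : ∀ y ∈ U, ∃ f' : EuclideanSpace ℝ (Fin N) →L[ℝ] ℝ, HasFDerivAt f f' y ∧ ‖f'‖ ≤ ρ y)
    (hρ : ContinuousOn ρ U) :
    f (γ 1) - f (γ 0) ≤ ∫ t in (0 : ℝ)..1, ‖deriv γ t‖ * ρ (γ t) := by
  obtain ⟨-, n, p, hp, hp0, hp1, hC1⟩ := hγ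
  have hlt (i : Fin n) : p i.castSucc < p i.succ := hp Fin.castSucc_lt_succ
  have hU (i : Fin n) : MapsTo γ (Icc (p i.castSucc) (p i.succ)) U :=
    hγU.mono_left (Icc_subset_Icc (hp0 ▸ hp.monotone (Fin.zero_le _))
      (hp1 ▸ hp.monotone (Fin.le_last _)))
  have := sub_le_integral_of_partition (g := f ∘ γ) (p := p) fun i ↦
    ⟨(intervalIntegrable_iff_integrableOn_Icc_of_le (hlt i).le).2
      (integrableOn_norm_deriv_mul (hlt i) (hC1 i) (hρ.comp (hC1 i).continuousOn (hU i))),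
      sub_le_integral_norm_deriv_mul (hlt i) (hC1 i) (hU i) hf hρ⟩
  rwa [hp0, hp1] at this

theorem sqrt_two_mul_dkOne_eq {N : ℕ} {x₀ : EuclideanSpace ℝ (Fin N)} (hx₀ : x₀ ≠ 0)
    (x : EuclideanSpace ℝ (Fin N)) :
    √2 * dkOne x x₀ =
      √((sqrtCoord (‖x₀‖⁻¹ • x₀) 0 x - sqrtCoord (‖x₀‖⁻¹ • x₀) 0 x₀) ^ 2 +
        (sqrtCoord (-(‖x₀‖⁻¹ • x₀)) 0 x - sqrtCoord (-(‖x₀‖⁻¹ • x₀)) 0 x₀) ^ 2) := by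
  have hr₀ : 0 < ‖x₀‖ := norm_pos_iff.2 hx₀
  have he : ‖‖x₀‖⁻¹ • x₀‖ = 1 := norm_smul_inv_norm hx₀
  have hex₀ : ⟪‖x₀‖⁻¹ • x₀, x₀⟫ = ‖x₀‖ := by
    rw [real_inner_smul_left, real_inner_self_eq_norm_sq]; field_simp
  have hex : ‖x₀‖ * ⟪‖x₀‖⁻¹ • x₀, x⟫ = ⟪x, x₀⟫ := by
    rw [real_inner_smul_left, real_inner_comm]; field_simp
  obtain ⟨hp₁, hp₂⟩ := abs_le.1 (abs_inner_le_norm_of_norm_eq_one he x)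
  have hs : √(‖x‖ + ⟪‖x₀‖⁻¹ • x₀, x⟫) * √(‖x₀‖ + ‖x₀‖) = √(2 * (‖x‖ * ‖x₀‖ + ⟪x, x₀⟫)) := by
    rw [← sqrt_mul (by linarith), ← hex]; ring_nf
  simp only [sqrtCoord, inner_neg_left, hex₀, add_zero, ← sub_eq_add_neg, sub_self, sqrt_zero,
    sub_zero]
  rw [dkOne, ← sqrt_mul zero_le_two, sub_sq, sq_sqrt (by linarith), sq_sqrt (by linarith),
    sq_sqrt (by linarith), mul_assoc, hs]
  ring_nf

theorem statement3_general (N : ℕ) (x₀ x : EuclideanSpace ℝ (Fin N))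
    (hx₀ : x₀ ≠ 0)
    (γ : ℝ → EuclideanSpace ℝ (Fin N))
    (hγ : PiecewiseC1 γ)
    (hne : ∀ t ∈ Set.Icc (0 : ℝ) 1, γ t ≠ 0)
    (hγ0 : γ 0 = x₀) (hγ1 : γ 1 = x) :
    (∫ t in (0 : ℝ)..1, ‖deriv γ t‖ / Real.sqrt (2 * ‖γ t‖)) ≥ Real.sqrt 2 * dkOne x x₀ := by
  set e := ‖x₀‖⁻¹ • x₀
  have he : ‖e‖ = 1 := norm_smul_inv_norm hx₀
  set D : ℝ → ℝ := fun ε ↦ √((sqrtCoord e ε x - sqrtCoord e ε x₀) ^ 2 +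
    (sqrtCoord (-e) ε x - sqrtCoord (-e) ε x₀) ^ 2)
  have hρ : ContinuousOn (fun y : EuclideanSpace ℝ (Fin N) ↦ (√(2 * ‖y‖))⁻¹) {0}ᶜ :=
    (continuous_const.mul continuous_norm).sqrt.continuousOn.inv₀ fun y hy ↦
      (sqrt_pos.2 (mul_pos two_pos (norm_pos_iff.2 hy))).ne'
  have hD (ε : ℝ) (hε : 0 < ε) : D ε ≤ ∫ t in (0 : ℝ)..1, ‖deriv γ t‖ * (√(2 * ‖γ t‖))⁻¹ :=
    sqrt_sq_add_sq_le_of_forall fun c₁ c₂ hc ↦ by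
      have := hγ.sub_le_integral (fun t ht ↦ hne t ht)
        (fun y hy ↦ exists_hasFDerivAt_sqrtCoord_comb he hε hc hy) hρ
      rw [hγ0, hγ1] at this
      linarith
  have hDc : Continuous D := by unfold D sqrtCoord; fun_prop
  rw [ge_iff_le, sqrt_two_mul_dkOne_eq hx₀]
  simpa only [div_eq_mul_inv] using le_of_tendsto (hDc.tendsto 0 |>.mono_left nhdsWithin_le_nhds)
    (eventually_nhdsWithin_of_forall (s := Ioi 0) hD)

/-- the conformal length (density `1/√(2|x|)`) of any piecewise `C¹` curve
from `x₀` to `x` avoiding the origin is at least `√2 · d(x, x₀)`. -/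
theorem statement3 (N : ℕ) (hN : 1 ≤ N) (x₀ x : EuclideanSpace ℝ (Fin N))
    (hx₀ : x₀ ≠ 0) (hx : x ≠ 0)
    (γ : ℝ → EuclideanSpace ℝ (Fin N))
    (hγ : PiecewiseC1 γ)
    (hne : ∀ t ∈ Set.Icc (0 : ℝ) 1, γ t ≠ 0)
    (hγ0 : γ 0 = x₀) (hγ1 : γ 1 = x) :
    (∫ t in (0 : ℝ)..1, ‖deriv γ t‖ / Real.sqrt (2 * ‖γ t‖)) ≥ Real.sqrt 2 * dkOne x x₀ :=
  statement3_general N x₀ x hx₀ γ hγ hne hγ0 hγ1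
end

section
/- Let N ≥ 2 and x, x₀ ∈ ℝ^N \ {0}. Then the infimum, over all piecewise continuously differentiable curves γ : [0,1] → ℝ^N \ {0} with γ(0) = x₀ and γ(1) = x, of the conformal length ∫₀¹ ‖γ′(t)‖ / √(2‖γ(t)‖) dt, equals √2 · d(x, x₀). In other words, for N ≥ 2 the function √2 d(x, x₀) coincides with the Riemannian distance L(x, x₀) determined by the conformal coefficient 1/√(2|x|). -/
/-!
The formula for `d` is a law of cosines: `d(x, y)² = a² + b² - 2ab cos(θ / 2)` with `a = √‖x‖`,
`b = √‖y‖` and `θ` the angle between `x` and `y`. So `d` is the Euclidean distance after taking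
square roots of the radii and halving the angles, and the triangle inequality for angles gives
the triangle inequality for `d`. Moreover `d(z, y) · D(z, y) = ‖z - y‖`, where `D` is `d` with the
inner minus sign turned into a plus; `D` is continuous with `D(y, y) = 2√‖y‖`. Together, the upper
right Dini derivative of `t ↦ √2 d(γ t, x₀)` is at most the conformal speed `‖γ'‖ / √(2‖γ‖)`, so
every admissible curve has conformal length `≥ √2 d(x, x₀)`.

Conversely, take a real-linear isometry `J : ℂ → ℝᴺ` whose image contains `x` and `x₀`, and square
roots `u`, `v` of their preimages with `Re (u v̄) ≥ 0`. Then `d(x, x₀) = ‖u - v‖`, and the curve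
`t ↦ J ((v + t (u - v))²)` avoids the origin and has constant conformal speed `√2 ‖u - v‖`.
-/

open Real Set Filter Topology MeasureTheory InnerProductGeometry ComplexConjugate Module

lemma norm_ofReal_sub_mul_exp_sq (a b θ : ℝ) :
    ‖(a : ℂ) - b * Complex.exp (θ * Complex.I)‖ ^ 2 = a ^ 2 + b ^ 2 - 2 * a * b * cos θ := by
  rw [Complex.sq_norm, Complex.normSq_apply]
  simp only [Complex.sub_re, Complex.sub_im, Complex.mul_re, Complex.mul_im, Complex.ofReal_re,
    Complex.ofReal_im, Complex.exp_ofReal_mul_I_re, Complex.exp_ofReal_mul_I_im]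
  nlinarith [sin_sq_add_cos_sq θ]

lemma sqrt_law_of_cosines_le_add {a b c α β γ : ℝ} (hac : 0 ≤ a * c) (hγ : 0 ≤ γ)
    (hγαβ : γ ≤ α + β) (hαβ : α + β ≤ π) :
    √(a ^ 2 + c ^ 2 - 2 * a * c * cos γ) ≤
      √(a ^ 2 + b ^ 2 - 2 * a * b * cos α) + √(b ^ 2 + c ^ 2 - 2 * b * c * cos β) := by
  have hnorm (a b θ : ℝ) : √(a ^ 2 + b ^ 2 - 2 * a * b * cos θ) =
      ‖(a : ℂ) - b * Complex.exp (θ * Complex.I)‖ := by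
    rw [← norm_ofReal_sub_mul_exp_sq, sqrt_sq (norm_nonneg _)]
  have hcos : cos (α + β) ≤ cos γ := cos_le_cos_of_nonneg_of_le_pi hγ hαβ hγαβ
  calc √(a ^ 2 + c ^ 2 - 2 * a * c * cos γ)
      ≤ √(a ^ 2 + c ^ 2 - 2 * a * c * cos (α + β)) := sqrt_le_sqrt (by nlinarith)
    _ ≤ ‖(a : ℂ) - b * Complex.exp (α * Complex.I)‖ +
          ‖b * Complex.exp (α * Complex.I) - c * Complex.exp ((α + β : ℝ) * Complex.I)‖ := by
      rw [hnorm]; exact norm_sub_le_norm_sub_add_norm_sub _ _ _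
    _ = _ := by
      have : (b : ℂ) * Complex.exp (α * Complex.I) - c * Complex.exp ((α + β : ℝ) * Complex.I) =
          Complex.exp (α * Complex.I) * (b - c * Complex.exp (β * Complex.I)) := by
        push_cast; rw [add_mul, Complex.exp_add]; ring
      rw [hnorm, hnorm, this, norm_mul, Complex.norm_exp_ofReal_mul_I, one_mul]

section InnerProductSpace

variable {E : Type*} [NormedAddCommGroup E] [InnerProductSpace ℝ E]

lemma sqrt_two_mul_norm_mul_norm_add_inner (x y : E) :
    √(2 * (‖x‖ * ‖y‖ + inner ℝ x y)) = 2 * √‖x‖ * √‖y‖ * cos (angle x y / 2) := by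
  have hcos : 0 ≤ cos (angle x y / 2) := cos_nonneg_of_neg_pi_div_two_le_of_le
    (by linarith [angle_nonneg x y, pi_pos]) (by linarith [angle_le_pi x y])
  rw [← sqrt_sq (by positivity : 0 ≤ 2 * √‖x‖ * √‖y‖ * cos (angle x y / 2))]
  congr 1
  rw [mul_pow, mul_pow, mul_pow, sq_sqrt (norm_nonneg x), sq_sqrt (norm_nonneg y), cos_sq,
    ← cos_angle_mul_norm_mul_norm]
  ring_nf

lemma norm_mul_norm_add_inner_nonneg (x y : E) : 0 ≤ ‖x‖ * ‖y‖ + inner ℝ x y := by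
  linarith [neg_le_of_abs_le (abs_real_inner_le_norm x y)]

lemma exists_norm_eq_one_inner_eq_zero [FiniteDimensional ℝ E] (hE : 2 ≤ finrank ℝ E) (e : E) :
    ∃ f : E, ‖f‖ = 1 ∧ inner ℝ e f = 0 := by
  have hK := (ℝ ∙ e).finrank_add_finrank_orthogonal
  have : 0 < finrank ℝ (ℝ ∙ e)ᗮ := by
    have := finrank_span_le_card (R := ℝ) ({e} : Set E)
    simp only [Set.toFinset_singleton, Finset.card_singleton] at this
    omega
  obtain ⟨⟨v, hvK⟩, hv⟩ := finrank_pos_iff_exists_ne_zero (R := ℝ).1 this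
  have hv : v ≠ 0 := by simpa using hv
  refine ⟨‖v‖⁻¹ • v, by simp [norm_smul, hv], ?_⟩
  rw [real_inner_smul_right,
    Submodule.inner_right_of_mem_orthogonal (Submodule.mem_span_singleton_self e) hvK, mul_zero]

lemma exists_linearIsometry_complex_of_orthonormal {e f : E} (he : ‖e‖ = 1) (hf : ‖f‖ = 1)
    (hef : inner ℝ e f = 0) : ∃ J : ℂ →ₗᵢ[ℝ] E, ∀ z : ℂ, J z = z.re • e + z.im • f := by
  refine ⟨{ toFun := fun z ↦ z.re • e + z.im • f
            map_add' := fun z w ↦ by simp only [Complex.add_re, Complex.add_im, add_smul]; abel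
            map_smul' := fun c z ↦ by simp [smul_add, smul_smul]
            norm_map' := fun z ↦ ?_ }, fun z ↦ rfl⟩
  simp only [LinearMap.coe_mk, AddHom.coe_mk]
  rw [← sq_eq_sq₀ (norm_nonneg _) (norm_nonneg _), norm_add_sq_real, real_inner_smul_left,
    real_inner_smul_right, hef, norm_smul, norm_smul, he, hf, Complex.sq_norm,
    Complex.normSq_apply]
  simp only [Real.norm_eq_abs, mul_one, sq_abs, mul_zero, add_zero]
  ring

lemma exists_linearIsometry_complex_mem_range [FiniteDimensional ℝ E] (hE : 2 ≤ finrank ℝ E)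
    (x : E) {y : E} (hy : y ≠ 0) : ∃ J : ℂ →ₗᵢ[ℝ] E, ∃ ζ ξ : ℂ, J ζ = x ∧ J ξ = y := by
  set e := ‖y‖⁻¹ • y
  have he : ‖e‖ = 1 := by simp [e, norm_smul, hy]
  have hye : ‖y‖ • e = y := by simp [e, smul_smul, hy]
  clear_value e
  set P := x - inner ℝ e x • e
  have hPe : inner ℝ e P = 0 := by simp [P, inner_sub_right, real_inner_smul_right, he]
  have hxP : inner ℝ e x • e + P = x := by simp [P]
  clear_value P
  by_cases hP : P = 0
  · obtain ⟨f, hf, hef⟩ := exists_norm_eq_one_inner_eq_zero hE e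
    obtain ⟨J, hJ⟩ := exists_linearIsometry_complex_of_orthonormal he hf hef
    refine ⟨J, inner ℝ e x, ‖y‖, ?_, ?_⟩
    · simpa [hJ, hP] using hxP
    · simpa [hJ] using hye
  · obtain ⟨J, hJ⟩ := exists_linearIsometry_complex_of_orthonormal he (f := ‖P‖⁻¹ • P)
      (by simp [norm_smul, hP]) (by rw [real_inner_smul_right, hPe, mul_zero])
    refine ⟨J, inner ℝ e x + ‖P‖ * Complex.I, ‖y‖, ?_, ?_⟩
    · simpa [hJ, smul_smul, hP] using hxP
    · simpa [hJ] using hye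

end InnerProductSpace

lemma add_ofReal_mul_sub_ne_zero {u v : ℂ} (hu : u ≠ 0) (hv : v ≠ 0) (huv : 0 ≤ (u * conj v).re)
    {t : ℝ} (ht : t ∈ Icc (0 : ℝ) 1) : v + t * (u - v) ≠ 0 := by
  intro h
  have hre := congrArg Complex.re h
  have him := congrArg Complex.im h
  simp only [Complex.add_re, Complex.add_im, Complex.mul_re, Complex.mul_im, Complex.ofReal_re,
    Complex.ofReal_im, Complex.sub_re, Complex.sub_im, Complex.zero_re, Complex.zero_im, zero_mul,
    sub_zero, add_zero] at hre him
  simp only [Complex.mul_re, Complex.conj_re, Complex.conj_im, mul_neg, sub_neg_eq_add] at huv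
  have hv2 := Complex.normSq_pos.2 hv
  rw [Complex.normSq_apply] at hv2
  have hsum : (1 - t) * (v.re * v.re + v.im * v.im) + t * (u.re * v.re + u.im * v.im) = 0 := by
    linear_combination v.re * hre + v.im * him
  obtain rfl : t = 1 := by nlinarith [mul_nonneg ht.1 huv, ht.2]
  exact hu (by simpa using h)

variable {N : ℕ}

lemma dkOne_eq_sqrt_law_of_cosines (x y : EuclideanSpace ℝ (Fin N)) :
    dkOne x y = √(√‖x‖ ^ 2 + √‖y‖ ^ 2 - 2 * √‖x‖ * √‖y‖ * cos (angle x y / 2)) := by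
  rw [dkOne, sqrt_two_mul_norm_mul_norm_add_inner, sq_sqrt (norm_nonneg x),
    sq_sqrt (norm_nonneg y)]

theorem dkOne_triangle (x y z : EuclideanSpace ℝ (Fin N)) :
    dkOne x z ≤ dkOne x y + dkOne y z := by
  simp only [dkOne_eq_sqrt_law_of_cosines]
  exact sqrt_law_of_cosines_le_add (by positivity) (by linarith [angle_nonneg x z])
    (by linarith [angle_le_angle_add_angle x y z]) (by linarith [angle_le_pi x y, angle_le_pi y z])

lemma dkOne_self (y : EuclideanSpace ℝ (Fin N)) : dkOne y y = 0 := by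
  have : 2 * (‖y‖ * ‖y‖ + inner ℝ y y) = (2 * ‖y‖) ^ 2 := by
    rw [real_inner_self_eq_norm_mul_norm]; ring
  rw [dkOne, this, sqrt_sq (by positivity)]
  ring_nf; exact sqrt_zero

noncomputable def dkOneConj (x y : EuclideanSpace ℝ (Fin N)) : ℝ :=
  √(‖x‖ + ‖y‖ + √(2 * (‖x‖ * ‖y‖ + inner ℝ x y)))

lemma dkOne_mul_dkOneConj (x y : EuclideanSpace ℝ (Fin N)) :
    dkOne x y * dkOneConj x y = ‖x - y‖ := by
  have hb := sq_sqrt (mul_nonneg zero_le_two (norm_mul_norm_add_inner_nonneg x y))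
  have hbA : √(2 * (‖x‖ * ‖y‖ + inner ℝ x y)) ≤ ‖x‖ + ‖y‖ := by
    rw [sqrt_le_iff]
    refine ⟨by positivity, ?_⟩
    nlinarith [real_inner_le_norm x y, sq_nonneg (‖x‖ - ‖y‖)]
  rw [dkOne, dkOneConj, ← sqrt_mul (sub_nonneg.2 hbA), ← sqrt_sq (norm_nonneg (x - y)),
    norm_sub_sq_real]
  congr 1
  nlinarith

lemma dkOneConj_self (y : EuclideanSpace ℝ (Fin N)) : dkOneConj y y = 2 * √‖y‖ := by
  have : 2 * (‖y‖ * ‖y‖ + inner ℝ y y) = (2 * ‖y‖) ^ 2 := by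
    rw [real_inner_self_eq_norm_mul_norm]; ring
  rw [dkOneConj, this, sqrt_sq (by positivity), ← sqrt_sq (by positivity : 0 ≤ 2 * √‖y‖),
    mul_pow, sq_sqrt (norm_nonneg y)]
  ring_nf

lemma dkOneConj_pos (x : EuclideanSpace ℝ (Fin N)) {y : EuclideanSpace ℝ (Fin N)} (hy : y ≠ 0) :
    0 < dkOneConj x y :=
  sqrt_pos.2 (by positivity)

lemma continuous_dkOneConj_left (y : EuclideanSpace ℝ (Fin N)) :
    Continuous (dkOneConj · y) := by
  unfold dkOneConj; fun_prop

lemma continuous_dkOne_left (y : EuclideanSpace ℝ (Fin N)) :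
    Continuous (dkOne · y) := by
  unfold dkOne; fun_prop

variable {γ : ℝ → EuclideanSpace ℝ (Fin N)}

noncomputable def conformalLength (γ : ℝ → EuclideanSpace ℝ (Fin N)) (a b : ℝ) : ℝ :=
  ∫ t in a..b, ‖deriv γ t‖ / √(2 * ‖γ t‖)

lemma eventually_slope_sqrt_two_mul_dkOne_lt {t : ℝ} {v : EuclideanSpace ℝ (Fin N)}
    (hγ : HasDerivWithinAt γ v (Ioi t) t) (ht : γ t ≠ 0) (y : EuclideanSpace ℝ (Fin N)) {r : ℝ}
    (hr : ‖v‖ / √(2 * ‖γ t‖) < r) :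
    ∀ᶠ z in 𝓝[>] t, slope (fun s ↦ √2 * dkOne (γ s) y) t z < r := by
  have hslope : Tendsto (fun z ↦ ‖slope γ t z‖) (𝓝[>] t) (𝓝 ‖v‖) :=
    ((hasDerivWithinAt_iff_tendsto_slope' (lt_irrefl t)).1 hγ).norm
  have hconj : Tendsto (fun z ↦ dkOneConj (γ z) (γ t)) (𝓝[>] t) (𝓝 (2 * √‖γ t‖)) := by
    rw [← dkOneConj_self]
    exact ((continuous_dkOneConj_left _).tendsto _).comp hγ.continuousWithinAt
  have hlim : √2 * ‖v‖ / (2 * √‖γ t‖) = ‖v‖ / √(2 * ‖γ t‖) := by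
    rw [sqrt_mul zero_le_two, div_eq_div_iff (by positivity) (by positivity)]
    ring_nf
    rw [sq_sqrt zero_le_two]
    ring
  have hev := ((hslope.const_mul √2).div hconj (by positivity)).eventually_lt_const (hlim ▸ hr)
  filter_upwards [hev, self_mem_nhdsWithin] with z hz (hzt : t < z)
  calc slope (fun s ↦ √2 * dkOne (γ s) y) t z
      ≤ √2 * dkOne (γ z) (γ t) / (z - t) := by
        rw [slope_def_field]
        refine div_le_div_of_nonneg_right ?_ (sub_pos.2 hzt).le
        have := mul_le_mul_of_nonneg_left (dkOne_triangle (γ z) (γ t) y) (sqrt_nonneg 2)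
        linarith
    _ = √2 * ‖slope γ t z‖ / dkOneConj (γ z) (γ t) := by
        rw [slope_def_module, norm_smul, norm_inv, Real.norm_eq_abs, abs_of_pos (sub_pos.2 hzt),
          ← dkOne_mul_dkOneConj]
        field_simp [(dkOneConj_pos (γ z) ht).ne']
    _ < r := hz

lemma exists_continuous_eqOn_conformalDensity {a b : ℝ} (hab : a < b)
    (hγ : ContDiffOn ℝ 1 γ (Icc a b)) (hne : ∀ t ∈ Icc a b, γ t ≠ 0) :
    ∃ ψ : ℝ → ℝ, Continuous ψ ∧
      (∀ t ∈ Icc a b, ψ t = ‖derivWithin γ (Icc a b) t‖ / √(2 * ‖γ t‖)) ∧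
      EqOn ψ (fun t ↦ ‖deriv γ t‖ / √(2 * ‖γ t‖)) (Ioo a b) := by
  set ψ₀ := fun t ↦ ‖derivWithin γ (Icc a b) t‖ / √(2 * ‖γ t‖)
  have hψ₀ : ContinuousOn ψ₀ (Icc a b) :=
    (hγ.continuousOn_derivWithin (uniqueDiffOn_Icc hab) le_rfl).norm.div
      (continuous_sqrt.comp_continuousOn (continuousOn_const.mul hγ.continuousOn.norm))
      fun t ht ↦ (sqrt_pos.2 (by have := norm_pos_iff.2 (hne t ht); positivity)).ne'
  refine ⟨fun t ↦ ψ₀ (projIcc a b hab.le t),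
    hψ₀.comp_continuous continuous_projIcc.subtype_val fun t ↦ (projIcc a b hab.le t).2,
    fun t ht ↦ by simp only [projIcc_of_mem _ ht, ψ₀], fun t ht ↦ ?_⟩
  simp only [projIcc_of_mem _ (Ioo_subset_Icc_self ht), ψ₀,
    derivWithin_of_mem_nhds (Icc_mem_nhds ht.1 ht.2)]

lemma intervalIntegrable_conformalDensity {a b : ℝ} (hab : a < b)
    (hγ : ContDiffOn ℝ 1 γ (Icc a b)) (hne : ∀ t ∈ Icc a b, γ t ≠ 0) :
    IntervalIntegrable (fun t ↦ ‖deriv γ t‖ / √(2 * ‖γ t‖)) volume a b := by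
  obtain ⟨ψ, hψc, -, hψ⟩ := exists_continuous_eqOn_conformalDensity hab hγ hne
  exact (hψc.intervalIntegrable a b).congr_uIoo (uIoo_of_le hab.le ▸ hψ)

lemma sqrt_two_mul_dkOne_le_conformalLength_of_contDiffOn {a b : ℝ} (hab : a < b)
    (hγ : ContDiffOn ℝ 1 γ (Icc a b)) (hne : ∀ t ∈ Icc a b, γ t ≠ 0) :
    √2 * dkOne (γ b) (γ a) ≤ conformalLength γ a b := by
  obtain ⟨ψ, hψc, hψ, hψeq⟩ := exists_continuous_eqOn_conformalDensity hab hγ hne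
  have hB (t : ℝ) : HasDerivAt (fun s ↦ ∫ u in a..s, ψ u) (ψ t) t :=
    (hψc.integral_hasStrictDerivAt a t).hasDerivAt
  have hγ' (t : ℝ) (ht : t ∈ Ico a b) :
      HasDerivWithinAt γ (derivWithin γ (Icc a b) t) (Ioi t) t :=
    (hγ.differentiableOn one_ne_zero t (Ico_subset_Icc_self ht)).hasDerivWithinAt
      |>.mono_of_mem_nhdsWithin (Icc_mem_nhdsGT_of_mem ht)
  have key := image_le_of_liminf_slope_right_le_deriv_boundary
    (f := fun s ↦ √2 * dkOne (γ s) (γ a)) (B := fun s ↦ ∫ u in a..s, ψ u)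
    (continuousOn_const.mul ((continuous_dkOne_left _).comp_continuousOn hγ.continuousOn))
    (by simp [dkOne_self]) (fun t _ ↦ (hB t).continuousAt.continuousWithinAt)
    (fun t _ ↦ (hB t).hasDerivWithinAt)
    (fun t ht r hr ↦ (eventually_slope_sqrt_two_mul_dkOne_lt (hγ' t ht)
      (hne t (Ico_subset_Icc_self ht)) (γ a) (hψ t (Ico_subset_Icc_self ht) ▸ hr)).frequently)
    (right_mem_Icc.2 hab.le)
  rwa [conformalLength, ← intervalIntegral.integral_congr_uIoo (uIoo_of_le hab.le ▸ hψeq)]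

lemma sqrt_two_mul_dkOne_le_conformalLength (hγ : PiecewiseC1 γ)
    (hne : ∀ t ∈ Icc (0 : ℝ) 1, γ t ≠ 0) : √2 * dkOne (γ 1) (γ 0) ≤ conformalLength γ 0 1 := by
  obtain ⟨-, n, p, hp, hp0, hp1, hpiece⟩ := hγ
  have hsub (i : Fin n) : Icc (p i.castSucc) (p i.succ) ⊆ Icc 0 1 :=
    Icc_subset_Icc (hp0 ▸ hp.monotone (Fin.zero_le _)) (hp1 ▸ hp.monotone (Fin.le_last _))
  have key (j : Fin (n + 1)) :
      IntervalIntegrable (fun t ↦ ‖deriv γ t‖ / √(2 * ‖γ t‖)) volume (p 0) (p j) ∧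
        √2 * dkOne (γ (p j)) (γ (p 0)) ≤ conformalLength γ (p 0) (p j) := by
    induction j using Fin.induction with
    | zero => simp [dkOne_self, conformalLength]
    | succ i ih =>
      have hlt := hp (Fin.castSucc_lt_succ (i := i))
      have hne' : ∀ t ∈ Icc (p i.castSucc) (p i.succ), γ t ≠ 0 := fun t ht ↦ hne t (hsub i ht)
      have hint := intervalIntegrable_conformalDensity hlt (hpiece i) hne'
      have hpiece_le := sqrt_two_mul_dkOne_le_conformalLength_of_contDiffOn hlt (hpiece i) hne'
      have htri := mul_le_mul_of_nonneg_left
        (dkOne_triangle (γ (p i.succ)) (γ (p i.castSucc)) (γ (p 0))) (sqrt_nonneg 2)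
      refine ⟨ih.1.trans hint, ?_⟩
      rw [conformalLength, ← intervalIntegral.integral_add_adjacent_intervals ih.1 hint]
      unfold conformalLength at ih hpiece_le
      linarith [ih.2]
  simpa [hp0, hp1] using (key (Fin.last n)).2

lemma dkOne_linearIsometry_sq (J : ℂ →ₗᵢ[ℝ] EuclideanSpace ℝ (Fin N)) {u v : ℂ}
    (huv : 0 ≤ (u * conj v).re) : dkOne (J (u ^ 2)) (J (v ^ 2)) = ‖u - v‖ := by
  have hsqrt : √(2 * (‖u‖ ^ 2 * ‖v‖ ^ 2 + inner ℝ (u ^ 2) (v ^ 2))) = 2 * (u * conj v).re := by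
    rw [← sqrt_sq (by positivity : 0 ≤ 2 * (u * conj v).re)]
    congr 1
    simp only [Complex.sq_norm, Complex.normSq_apply, Complex.inner]
    simp only [pow_two, Complex.mul_re, Complex.mul_im, Complex.conj_re, Complex.conj_im]
    ring
  rw [dkOne, J.norm_map, J.norm_map, J.inner_map_map, norm_pow, norm_pow, hsqrt,
    ← sqrt_sq (norm_nonneg (u - v))]
  congr 1
  simp only [Complex.sq_norm, Complex.normSq_apply, Complex.mul_re, Complex.sub_re,
    Complex.sub_im, Complex.conj_re, Complex.conj_im]
  ring

lemma norm_deriv_linearIsometry_sq_div (J : ℂ →ₗᵢ[ℝ] EuclideanSpace ℝ (Fin N)) {w : ℝ → ℂ}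
    {w' : ℂ} {t : ℝ} (hw : HasDerivAt w w' t) (ht : w t ≠ 0) :
    ‖deriv (fun s ↦ J (w s ^ 2)) t‖ / √(2 * ‖J (w t ^ 2)‖) = √2 * ‖w'‖ := by
  have hd : HasDerivAt (fun s ↦ J (w s ^ 2)) (J (2 * w t * w')) t := by
    have h2 : HasDerivAt (fun s ↦ w s ^ 2) (2 * w t * w') t := by simpa using hw.fun_pow 2
    exact J.toContinuousLinearMap.hasFDerivAt.comp_hasDerivAt t h2
  have hwt : 0 < ‖w t‖ := norm_pos_iff.2 ht
  rw [hd.deriv, J.norm_map, J.norm_map, norm_mul, norm_mul, norm_pow, sqrt_mul zero_le_two,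
    sqrt_sq (norm_nonneg _), Complex.norm_ofNat, div_eq_iff (by positivity)]
  ring_nf
  rw [sq_sqrt zero_le_two]

lemma conformalLength_linearIsometry_sq_segment (J : ℂ →ₗᵢ[ℝ] EuclideanSpace ℝ (Fin N))
    {u v : ℂ} (h : ∀ t ∈ Icc (0 : ℝ) 1, v + t * (u - v) ≠ 0) :
    conformalLength (fun t ↦ J ((v + t * (u - v)) ^ 2)) 0 1 = √2 * ‖u - v‖ := by
  have hw (t : ℝ) : HasDerivAt (fun s : ℝ ↦ v + s * (u - v)) (u - v) t := by
    simpa using ((hasDerivAt_id t).ofReal_comp.mul_const (u - v)).const_add v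
  rw [conformalLength, intervalIntegral.integral_congr (g := fun _ ↦ √2 * ‖u - v‖)
    fun t ht ↦ norm_deriv_linearIsometry_sq_div J (hw t)
      (h t (by rwa [uIcc_of_le zero_le_one] at ht))]
  simp

lemma piecewiseC1_of_contDiff (hγ : ContDiff ℝ 1 γ) : PiecewiseC1 γ :=
  ⟨hγ.continuous.continuousOn, 1, fun i ↦ (i : ℝ), Nat.strictMono_cast.comp Fin.val_strictMono,
    by simp, by simp, fun _ ↦ hγ.contDiffOn⟩

lemma exists_curve_conformalLength_eq (hN : 2 ≤ N) {x x₀ : EuclideanSpace ℝ (Fin N)}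
    (hx : x ≠ 0) (hx₀ : x₀ ≠ 0) :
    ∃ γ : ℝ → EuclideanSpace ℝ (Fin N), PiecewiseC1 γ ∧ γ 0 = x₀ ∧ γ 1 = x ∧
      (∀ t ∈ Icc (0 : ℝ) 1, γ t ≠ 0) ∧ conformalLength γ 0 1 = √2 * dkOne x x₀ := by
  obtain ⟨J, ζ, ξ, rfl, rfl⟩ :=
    exists_linearIsometry_complex_mem_range (by simpa using hN) x hx₀
  obtain ⟨v, rfl⟩ := IsAlgClosed.exists_pow_nat_eq ξ two_pos
  obtain ⟨u, rfl, huv⟩ : ∃ u : ℂ, u ^ 2 = ζ ∧ 0 ≤ (u * conj v).re := by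
    obtain ⟨u, rfl⟩ := IsAlgClosed.exists_pow_nat_eq ζ two_pos
    rcases le_total 0 (u * conj v).re with h | h
    · exact ⟨u, rfl, h⟩
    · exact ⟨-u, neg_sq u, by simp only [neg_mul, Complex.neg_re]; linarith⟩
  have hu : u ≠ 0 := by rintro rfl; simp at hx
  have hv : v ≠ 0 := by rintro rfl; simp at hx₀
  have hne (t : ℝ) (ht : t ∈ Icc (0 : ℝ) 1) := add_ofReal_mul_sub_ne_zero hu hv huv ht
  refine ⟨fun t ↦ J ((v + t * (u - v)) ^ 2), piecewiseC1_of_contDiff ?_, by simp, by simp,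
    fun t ht ↦ (map_ne_zero_iff J J.injective).2 (pow_ne_zero 2 (hne t ht)), ?_⟩
  · exact J.toContinuousLinearMap.contDiff.comp
      ((contDiff_const.add (Complex.ofRealCLM.contDiff.mul contDiff_const)).pow 2)
  · rw [conformalLength_linearIsometry_sq_segment J hne, dkOne_linearIsometry_sq J huv]

/-- for `N ≥ 2`, the infimum of the conformal lengths (density `1/√(2|x|)`)
of piecewise `C¹` curves from `x₀` to `x` avoiding the origin equals `√2 · d(x, x₀)`;
i.e. `√2 d` is the Riemannian distance determined by the coefficient `1/√(2|x|)`. -/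
theorem statement4 (N : ℕ) (hN : 2 ≤ N) (x x₀ : EuclideanSpace ℝ (Fin N))
    (hx : x ≠ 0) (hx₀ : x₀ ≠ 0) :
    sInf {L : ℝ | ∃ γ : ℝ → EuclideanSpace ℝ (Fin N),
        PiecewiseC1 γ ∧ γ 0 = x₀ ∧ γ 1 = x ∧ (∀ t ∈ Set.Icc (0 : ℝ) 1, γ t ≠ 0) ∧
        L = ∫ t in (0 : ℝ)..1, ‖deriv γ t‖ / Real.sqrt (2 * ‖γ t‖)} =
      Real.sqrt 2 * dkOne x x₀ := by
  refine IsLeast.csInf_eq ⟨?_, ?_⟩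
  · obtain ⟨γ, hγ, h0, h1, hne, hL⟩ := exists_curve_conformalLength_eq hN hx hx₀
    exact ⟨γ, hγ, h0, h1, hne, hL.symm⟩
  · rintro L ⟨γ, hγ, rfl, rfl, hne, rfl⟩
    exact sqrt_two_mul_dkOne_le_conformalLength hγ hne
end

section
/- Let G be a finite subgroup of the orthogonal group O(N) acting on ℝ^N, let x, y ∈ ℝ^N, let η belong to the convex hull of the orbit G·x = {g·x : g ∈ G}, and let u ∈ [−1, 1]. Then ‖x‖‖y‖ + ⟨η, y⟩ ≥ 0, the quantity ‖x‖ + ‖y‖ − sqrt(2(‖x‖‖y‖ + ⟨η, y⟩))·u is nonnegative, and sqrt( ‖x‖ + ‖y‖ − sqrt(2(‖x‖‖y‖ + ⟨η, y⟩))·u ) ≥ min_{g ∈ G} d(g·x, y). -/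
open Real RealInnerProductSpace

theorem Real.sqrt_two_mul_add_le {a b c : ℝ} (ha : 0 ≤ a) (hb : 0 ≤ b) (hc : c ≤ a * b) :
    √(2 * (a * b + c)) ≤ a + b := by
  rw [sqrt_le_left (by positivity)]
  nlinarith [sq_nonneg (a - b)]

section Orbit

variable {E : Type*} [NormedAddCommGroup E] [InnerProductSpace ℝ E]
  {S : Set (E ≃ₗᵢ[ℝ] E)} {x η : E}

theorem norm_le_of_mem_convexHull_orbit (hη : η ∈ convexHull ℝ {z | ∃ g ∈ S, z = g x}) :
    ‖η‖ ≤ ‖x‖ := by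
  obtain ⟨_, ⟨g, -, rfl⟩, hle⟩ :=
    (convexOn_univ_norm (E := E)).exists_ge_of_mem_convexHull (Set.subset_univ _) hη
  simpa using hle

theorem exists_inner_le_of_mem_convexHull_orbit
    (hη : η ∈ convexHull ℝ {z | ∃ g ∈ S, z = g x}) (y : E) :
    ∃ g ∈ S, ⟪η, y⟫ ≤ ⟪g x, y⟫ := by
  obtain ⟨_, ⟨g, hg, rfl⟩, hle⟩ :=
    ((innerSL ℝ y).toLinearMap.convexOn convex_univ).exists_ge_of_mem_convexHull
      (Set.subset_univ _) hη
  exact ⟨g, hg, by simpa [real_inner_comm] using hle⟩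

end Orbit

theorem dkOne_le_sqrt {N : ℕ} {x y : EuclideanSpace ℝ (Fin N)} {p u : ℝ} (hp : p ≤ ⟪x, y⟫)
    (hu : u ≤ 1) : dkOne x y ≤ √(‖x‖ + ‖y‖ - √(2 * (‖x‖ * ‖y‖ + p)) * u) := by
  refine sqrt_le_sqrt (sub_le_sub_left ?_ _)
  calc √(2 * (‖x‖ * ‖y‖ + p)) * u ≤ √(2 * (‖x‖ * ‖y‖ + p)) :=
        mul_le_of_le_one_right (sqrt_nonneg _) hu
    _ ≤ √(2 * (‖x‖ * ‖y‖ + ⟪x, y⟫)) := by gcongr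

theorem statement7_general (N : ℕ)
    (G : Subgroup (EuclideanSpace ℝ (Fin N) ≃ₗᵢ[ℝ] EuclideanSpace ℝ (Fin N)))
    (x y η : EuclideanSpace ℝ (Fin N))
    (hη : η ∈ convexHull ℝ {z | ∃ g ∈ G, z = g x})
    (u : ℝ) (hu : u ∈ Set.Icc (-1 : ℝ) 1) :
    0 ≤ ‖x‖ * ‖y‖ + (inner ℝ η y : ℝ) ∧
    0 ≤ ‖x‖ + ‖y‖ - Real.sqrt (2 * (‖x‖ * ‖y‖ + (inner ℝ η y : ℝ))) * u ∧
    Real.sqrt (‖x‖ + ‖y‖ - Real.sqrt (2 * (‖x‖ * ‖y‖ + (inner ℝ η y : ℝ))) * u) ≥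
      ⨅ g : G, dkOne ((g : EuclideanSpace ℝ (Fin N) ≃ₗᵢ[ℝ] EuclideanSpace ℝ (Fin N)) x) y := by
  have hη_norm : ‖η‖ ≤ ‖x‖ := norm_le_of_mem_convexHull_orbit (S := G) hη
  have h_abs : |⟪η, y⟫| ≤ ‖x‖ * ‖y‖ := (abs_real_inner_le_norm η y).trans (by gcongr)
  obtain ⟨g, hg, hg_inner⟩ := exists_inner_le_of_mem_convexHull_orbit (S := G) hη y
  refine ⟨by linarith [neg_abs_le ⟪η, y⟫], ?_, ?_⟩
  · refine sub_nonneg.2 ((mul_le_of_le_one_right (sqrt_nonneg _) hu.2).trans ?_)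
    exact sqrt_two_mul_add_le (norm_nonneg x) (norm_nonneg y) (le_of_abs_le h_abs)
  · have h_bdd : BddBelow (Set.range fun g : G =>
        dkOne ((g : EuclideanSpace ℝ (Fin N) ≃ₗᵢ[ℝ] EuclideanSpace ℝ (Fin N)) x) y) :=
      ⟨0, by rintro _ ⟨_, rfl⟩; exact sqrt_nonneg _⟩
    refine (ciInf_le h_bdd ⟨g, hg⟩).trans ?_
    simpa only [LinearIsometryEquiv.norm_map] using dkOne_le_sqrt hg_inner hu.2

/-- for a finite group `G` of orthogonal transformations of `ℝ^N`,
`η` in the convex hull of the orbit `G·x`, and `u ∈ [−1,1]`, one has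
`‖x‖‖y‖ + ⟨η,y⟩ ≥ 0`, the quantity `‖x‖ + ‖y‖ − sqrt(2(‖x‖‖y‖+⟨η,y⟩))·u` is nonnegative,
and its square root is at least `min_{g ∈ G} d(g·x, y)`. -/
theorem statement7 (N : ℕ)
    (G : Subgroup (EuclideanSpace ℝ (Fin N) ≃ₗᵢ[ℝ] EuclideanSpace ℝ (Fin N)))
    (hGfin : Finite G)
    (x y η : EuclideanSpace ℝ (Fin N))
    (hη : η ∈ convexHull ℝ {z | ∃ g ∈ G, z = g x})
    (u : ℝ) (hu : u ∈ Set.Icc (-1 : ℝ) 1) :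
    0 ≤ ‖x‖ * ‖y‖ + (inner ℝ η y : ℝ) ∧
    0 ≤ ‖x‖ + ‖y‖ - Real.sqrt (2 * (‖x‖ * ‖y‖ + (inner ℝ η y : ℝ))) * u ∧
    Real.sqrt (‖x‖ + ‖y‖ - Real.sqrt (2 * (‖x‖ * ‖y‖ + (inner ℝ η y : ℝ))) * u) ≥
      ⨅ g : G, dkOne ((g : EuclideanSpace ℝ (Fin N) ≃ₗᵢ[ℝ] EuclideanSpace ℝ (Fin N)) x) y :=
  statement7_general N G x y η hη u hu
end

section
/- Let λ > −1 be real, m ∈ ℕ, l ∈ ℕ, and set ψ_l(r) = r^m · L_l^{λ}(2r) · e^{−r} for r > 0. For g ∈ C²((0,∞)) define the deformed Laguerre operator L_{1,λ} g (r) = −r g″(r) + r g(r) − (λ+1) g′(r), and for f ∈ C_c^∞((0,∞)) define T f(r) = r^m · L_{1,λ}( s ↦ s^{−m} f(s) )(r). Then for every f ∈ C_c^∞((0,∞)), ∫₀^∞ ψ_l(r) f(r) r^{λ−2m} dr = (2l + λ + 1)^{−1} · ∫₀^∞ ψ_l(r) (T f)(r) r^{λ−2m} dr; that is, the coefficient of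 f against ψ_l in L²((0,∞), r^{λ−2m} dr) is obtained from that of T f after dividing by the eigenvalue 2l + λ + 1. -/
open scoped BigOperators
open Filter Set MeasureTheory intervalIntegral
open scoped Topology

/-- The generalized Laguerre polynomial `L_l^μ(t)`. -/
noncomputable def lagPoly (μ : ℝ) (l : ℕ) (t : ℝ) : ℝ :=
  ∑ j ∈ Finset.range (l + 1),
    ((-1 : ℝ) ^ j * Real.Gamma (μ + l + 1) /
      ((Nat.factorial (l - j) : ℝ) * Real.Gamma (μ + j + 1))) * t ^ j / (Nat.factorial j : ℝ)



private lemma derivZero (h : ℝ → ℝ) (hc : ContDiff ℝ (⊤:ℕ∞) h) (h0 : ∀ x ≤ (0:ℝ), h x = 0) :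
    ∀ x ≤ (0:ℝ), deriv h x = 0 := by
  have hneg : ∀ x < (0:ℝ), deriv h x = 0 := by
    intro x hx
    have he : h =ᶠ[𝓝 x] (fun _ => (0:ℝ)) := by
      filter_upwards [Iio_mem_nhds hx] with y hy
      exact h0 y (le_of_lt hy)
    rw [he.deriv_eq, deriv_const]
  intro x hx
  rcases lt_or_eq_of_le hx with hlt | rfl
  · exact hneg x hlt
  · have hct : ContinuousAt (deriv h) 0 :=
      ((contDiff_infty_iff_deriv.mp hc).2.continuous).continuousAt
    have t1 : Tendsto (deriv h) (𝓝[<] (0:ℝ)) (𝓝 (deriv h 0)) :=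
      hct.continuousWithinAt
    have t2 : Tendsto (deriv h) (𝓝[<] (0:ℝ)) (𝓝 0) := by
      refine Tendsto.congr' ?_ tendsto_const_nhds
      filter_upwards [self_mem_nhdsWithin] with y hy
      exact (hneg y hy).symm
    exact tendsto_nhds_unique t1 t2

private lemma flatZero (k : ℕ) : ∀ (h : ℝ → ℝ), ContDiff ℝ (⊤:ℕ∞) h → (∀ x ≤ (0:ℝ), h x = 0) →
    Tendsto (fun r => h r / r ^ k) (𝓝[>] (0:ℝ)) (𝓝 0) := by
  induction k with
  | zero =>
    intro h hc h0
    simp only [pow_zero, div_one]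
    have : ContinuousAt h 0 := hc.continuous.continuousAt
    have := this.continuousWithinAt (s := Ioi (0:ℝ))
    rwa [ContinuousWithinAt, h0 0 le_rfl] at this
  | succ k ih =>
    intro h hc h0
    have hd := (contDiff_infty_iff_deriv.mp hc).2
    have hd0 : ∀ x ≤ (0:ℝ), deriv h x = 0 := derivZero h hc h0
    have IH := ih (deriv h) hd hd0
    rw [Metric.tendsto_nhdsWithin_nhds] at IH ⊢
    intro ε hε
    obtain ⟨δ, hδ, hIH⟩ := IH (ε / 2) (by linarith)
    refine ⟨δ, hδ, ?_⟩
    intro x hx hxd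
    have hx0 : (0:ℝ) < x := hx
    have hxδ : x < δ := by
      have := hxd
      rwa [Real.dist_eq, sub_zero, abs_of_pos hx0] at this
    have hbound : ∀ t ∈ Set.uIoc (0:ℝ) x, ‖deriv h t‖ ≤ ε / 2 * x ^ k := by
      intro t ht
      rw [Set.uIoc_of_le (le_of_lt hx0)] at ht
      have ht0 : (0:ℝ) < t := ht.1
      have htx : t ≤ x := ht.2
      have := hIH (x := t) ht0 (by rw [Real.dist_eq, sub_zero, abs_of_pos ht0]; linarith)
      rw [Real.dist_eq, sub_zero, abs_div, abs_of_pos (pow_pos ht0 k)] at this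
      have h1 : |deriv h t| ≤ ε / 2 * t ^ k := by
        rw [div_lt_iff₀ (pow_pos ht0 k)] at this
        linarith
      calc ‖deriv h t‖ ≤ ε / 2 * t ^ k := h1
        _ ≤ ε / 2 * x ^ k := by
            have := pow_le_pow_left₀ (le_of_lt ht0) htx k
            nlinarith
    have hftc : ∫ t in (0:ℝ)..x, deriv h t = h x - h 0 := by
      refine intervalIntegral.integral_deriv_eq_sub (fun t _ => (hc.differentiable (by simp)) t) ?_
      exact (hd.continuous.intervalIntegrable 0 x)
    have hnorm : ‖∫ t in (0:ℝ)..x, deriv h t‖ ≤ ε / 2 * x ^ k * |x - 0| :=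
      intervalIntegral.norm_integral_le_of_norm_le_const hbound
    rw [hftc, h0 0 le_rfl, sub_zero, sub_zero, abs_of_pos hx0] at hnorm
    rw [Real.dist_eq, sub_zero, abs_div, abs_of_pos (pow_pos hx0 (k+1))]
    rw [div_lt_iff₀ (pow_pos hx0 (k+1))]
    calc |h x| ≤ ε / 2 * x ^ k * x := hnorm
      _ = ε / 2 * x ^ (k+1) := by ring
      _ < ε * x ^ (k+1) := by
          have := pow_pos hx0 (k+1)
          nlinarith

noncomputable def lagC (lam : ℝ) (l j : ℕ) : ℝ :=
  (-1 : ℝ) ^ j * Real.Gamma (lam + l + 1) /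
    ((Nat.factorial (l - j) : ℝ) * Real.Gamma (lam + j + 1))

noncomputable def lagD (lam : ℝ) (l : ℕ) (t : ℝ) : ℝ :=
  ∑ j ∈ Finset.range (l + 1), lagC lam l j * ((j : ℝ) * t ^ (j - 1)) / (Nat.factorial j : ℝ)

noncomputable def lagD2 (lam : ℝ) (l : ℕ) (t : ℝ) : ℝ :=
  ∑ j ∈ Finset.range (l + 1),
    lagC lam l j * ((j : ℝ) * (((j - 1 : ℕ) : ℝ) * t ^ (j - 1 - 1))) / (Nat.factorial j : ℝ)

lemma lagPoly_eq (lam : ℝ) (l : ℕ) (t : ℝ) :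
    lagPoly lam l t = ∑ j ∈ Finset.range (l + 1), lagC lam l j * t ^ j / (Nat.factorial j : ℝ) :=
  rfl

lemma lagPoly_hasDerivAt (lam : ℝ) (l : ℕ) (t : ℝ) :
    HasDerivAt (lagPoly lam l) (lagD lam l t) t := by
  have : ∀ t : ℝ, lagPoly lam l t
      = ∑ j ∈ Finset.range (l + 1), lagC lam l j * t ^ j / (Nat.factorial j : ℝ) :=
    fun t => rfl
  rw [show lagPoly lam l = fun t => ∑ j ∈ Finset.range (l + 1),
      lagC lam l j * t ^ j / (Nat.factorial j : ℝ) from funext this]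
  unfold lagD
  apply HasDerivAt.fun_sum
  intro j _
  exact ((hasDerivAt_pow j t).const_mul (lagC lam l j)).div_const _

lemma lagD_hasDerivAt (lam : ℝ) (l : ℕ) (t : ℝ) :
    HasDerivAt (lagD lam l) (lagD2 lam l t) t := by
  unfold lagD lagD2
  apply HasDerivAt.fun_sum
  intro j _
  have h := ((hasDerivAt_pow (j - 1) t).const_mul (lagC lam l j * (j : ℝ))).div_const
    ((Nat.factorial j : ℝ))
  have hfun : (fun x : ℝ => lagC lam l j * ((j : ℝ) * x ^ (j - 1)) / (Nat.factorial j : ℝ))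
      = fun x : ℝ => lagC lam l j * (j : ℝ) * x ^ (j - 1) / (Nat.factorial j : ℝ) := by
    funext x; ring
  rw [hfun]
  have hval : lagC lam l j * ((j : ℝ) * (((j - 1 : ℕ) : ℝ) * t ^ (j - 1 - 1)))
        / (Nat.factorial j : ℝ)
      = lagC lam l j * (j : ℝ) * (((j - 1 : ℕ) : ℝ) * t ^ (j - 1 - 1))
        / (Nat.factorial j : ℝ) := by ring
  rw [hval]
  exact h


lemma lag_key (lam : ℝ) (hlam : lam > -1) (l j : ℕ) (hj : j < l) (t : ℝ) :
    t * (lagC lam l (j+1) * ((((j:ℝ))+1) * ((j : ℝ) * t ^ (j - 1)))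
        / (Nat.factorial (j+1) : ℝ))
      + (lam + 1 - t) * (lagC lam l (j+1) * ((((j:ℝ))+1) * t ^ j)
        / (Nat.factorial (j+1) : ℝ))
      + (l : ℝ) * (lagC lam l (j+1) * t ^ (j+1) / (Nat.factorial (j+1) : ℝ))
    = ((l : ℝ) - ((j:ℝ)+1)) * lagC lam l (j+1) * t ^ (j+1) / (Nat.factorial (j+1) : ℝ)
      - ((l : ℝ) - j) * lagC lam l j * t ^ j / (Nat.factorial j : ℝ) := by
  have hΓpos : (0:ℝ) < Real.Gamma (lam + j + 1) := by
    apply Real.Gamma_pos_of_pos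
    have : (0:ℝ) ≤ j := Nat.cast_nonneg j
    linarith
  have hne : lam + (j:ℝ) + 1 ≠ 0 := by
    have : (0:ℝ) ≤ j := Nat.cast_nonneg j
    intro hcon; linarith
  have hΓ : Real.Gamma (lam + ((j:ℝ)+1) + 1) = (lam + j + 1) * Real.Gamma (lam + j + 1) := by
    have h2 : lam + ((j : ℝ) + 1) + 1 = (lam + j + 1) + 1 := by ring
    rw [h2, Real.Gamma_add_one hne]
  have hfac1 : ((Nat.factorial (j+1) : ℝ)) = ((j:ℝ)+1) * (Nat.factorial j : ℝ) := by
    rw [Nat.factorial_succ]; push_cast; ring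
  have hfac2 : ((Nat.factorial (l - j) : ℝ))
      = ((l:ℝ) - j) * (Nat.factorial (l - (j+1)) : ℝ) := by
    have h' : l - j = (l - (j+1)) + 1 := by omega
    rw [h', Nat.factorial_succ]
    have hc : ((l - (j+1) : ℕ) : ℝ) = (l : ℝ) - ((j:ℝ)+1) := by
      push_cast [Nat.cast_sub hj]; ring
    push_cast [hc]
    ring
  have hCsucc : lagC lam l (j+1)
      = -lagC lam l j * ((l:ℝ) - j) / (lam + j + 1) := by
    unfold lagC
    have hcast : ((j:ℕ)+1 : ℕ) = j + 1 := rfl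
    rw [show ((lam + ((j+1:ℕ)) + 1)) = lam + ((j:ℝ)+1) + 1 by push_cast; ring]
    rw [hΓ, pow_succ]
    rw [show (Nat.factorial (l - j) : ℝ) = ((l:ℝ) - j) * (Nat.factorial (l - (j+1)) : ℝ)
      from hfac2] at *
    have hlj : (0:ℝ) < (l:ℝ) - j := by
      have : (j:ℝ) + 1 ≤ l := by exact_mod_cast hj
      linarith
    have hfacne : (Nat.factorial (l - (j+1)) : ℝ) ≠ 0 :=
      Nat.cast_ne_zero.mpr (Nat.factorial_ne_zero _)
    field_simp
  have hfacjne : (Nat.factorial j : ℝ) ≠ 0 := Nat.cast_ne_zero.mpr (Nat.factorial_ne_zero _)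
  have hlj : (0:ℝ) < (l:ℝ) - j := by
    have : (j:ℝ) + 1 ≤ l := by exact_mod_cast hj
    linarith
  have hterm : t * (lagC lam l (j+1) * (((j:ℝ)+1) * ((j:ℝ) * t ^ (j-1)))
        / (Nat.factorial (j+1) : ℝ))
      = lagC lam l (j+1) * (((j:ℝ)+1) * ((j:ℝ) * t ^ j)) / (Nat.factorial (j+1) : ℝ) := by
    rcases j with _ | i
    · simp
    · simp only [Nat.add_sub_cancel, pow_succ]
      ring
  rw [hterm, hCsucc, hfac1, pow_succ]
  field_simp
  ring

lemma lag_ode (lam : ℝ) (hlam : lam > -1) (l : ℕ) (t : ℝ) :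
    t * lagD2 lam l t + (lam + 1 - t) * lagD lam l t + (l : ℝ) * lagPoly lam l t = 0 := by
  have hGa : ∀ j : ℕ, (0:ℝ) < Real.Gamma (lam + j + 1) := by
    intro j
    apply Real.Gamma_pos_of_pos
    have : (0:ℝ) ≤ j := Nat.cast_nonneg j
    linarith
  set G : ℕ → ℝ := fun j => ((l : ℝ) - j) * lagC lam l j * t ^ j / (Nat.factorial j : ℝ)
    with hGdef
  have h1 : t * lagD2 lam l t + (lam + 1 - t) * lagD lam l t + (l : ℝ) * lagPoly lam l t
      = ∑ j ∈ Finset.range (l + 1),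
          (t * (lagC lam l j * ((j : ℝ) * (((j - 1 : ℕ) : ℝ) * t ^ (j - 1 - 1)))
              / (Nat.factorial j : ℝ))
            + (lam + 1 - t) * (lagC lam l j * ((j : ℝ) * t ^ (j - 1)) / (Nat.factorial j : ℝ))
            + (l : ℝ) * (lagC lam l j * t ^ j / (Nat.factorial j : ℝ))) := by
    rw [lagPoly_eq, lagD, lagD2, Finset.mul_sum, Finset.mul_sum, Finset.mul_sum,
      ← Finset.sum_add_distrib, ← Finset.sum_add_distrib]
  rw [h1, Finset.sum_range_succ']
  have h0 : (t * (lagC lam l 0 * ((0 : ℝ) * (((0 - 1 : ℕ) : ℝ) * t ^ (0 - 1 - 1)))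
          / (Nat.factorial 0 : ℝ))
        + (lam + 1 - t) * (lagC lam l 0 * ((0 : ℝ) * t ^ (0 - 1)) / (Nat.factorial 0 : ℝ))
        + (l : ℝ) * (lagC lam l 0 * t ^ 0 / (Nat.factorial 0 : ℝ))) = G 0 := by
    simp [hGdef]
  have key : ∀ j ∈ Finset.range l,
      (t * (lagC lam l (j+1) * (((j+1 : ℕ) : ℝ) * (((j + 1 - 1 : ℕ) : ℝ) * t ^ (j + 1 - 1 - 1)))
          / (Nat.factorial (j+1) : ℝ))
        + (lam + 1 - t) * (lagC lam l (j+1) * (((j+1 : ℕ) : ℝ) * t ^ (j + 1 - 1))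
          / (Nat.factorial (j+1) : ℝ))
        + (l : ℝ) * (lagC lam l (j+1) * t ^ (j+1) / (Nat.factorial (j+1) : ℝ)))
      = G (j+1) - G j := by
    intro j hj
    rw [Finset.mem_range] at hj
    simp only [Nat.add_sub_cancel, Nat.cast_add, Nat.cast_one, hGdef]
    exact lag_key lam hlam l j hj t
  rw [Finset.sum_congr rfl key, Finset.sum_range_sub G]
  have hGl : G l = 0 := by simp [hGdef]
  rw [hGl]
  simp [hGdef]

noncomputable def phiF (lam : ℝ) (l : ℕ) (r : ℝ) : ℝ := lagPoly lam l (2*r) * Real.exp (-r)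
noncomputable def phiF1 (lam : ℝ) (l : ℕ) (r : ℝ) : ℝ :=
  (2 * lagD lam l (2*r) - lagPoly lam l (2*r)) * Real.exp (-r)
noncomputable def phiF2 (lam : ℝ) (l : ℕ) (r : ℝ) : ℝ :=
  (4 * lagD2 lam l (2*r) - 4 * lagD lam l (2*r) + lagPoly lam l (2*r)) * Real.exp (-r)

lemma two_mul_hasDerivAt (r : ℝ) : HasDerivAt (fun x : ℝ => 2 * x) 2 r := by
  simpa using (hasDerivAt_id r).const_mul (2:ℝ)

lemma exp_neg_hasDerivAt (r : ℝ) :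
    HasDerivAt (fun x : ℝ => Real.exp (-x)) (-Real.exp (-r)) r := by
  exact ((Real.hasDerivAt_exp (-r)).comp r ((hasDerivAt_id r).neg)).congr_deriv (by ring)

lemma phiF_hasDerivAt (lam : ℝ) (l : ℕ) (r : ℝ) :
    HasDerivAt (phiF lam l) (phiF1 lam l r) r := by
  have hy : HasDerivAt (fun x : ℝ => lagPoly lam l (2*x)) (lagD lam l (2*r) * 2) r := by
    exact
      (lagPoly_hasDerivAt lam l (2*r)).comp r (two_mul_hasDerivAt r)
  have h := hy.mul (exp_neg_hasDerivAt r)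
  unfold phiF phiF1
  exact h.congr_deriv (by ring)

lemma phiF1_hasDerivAt (lam : ℝ) (l : ℕ) (r : ℝ) :
    HasDerivAt (phiF1 lam l) (phiF2 lam l r) r := by
  have hy : HasDerivAt (fun x : ℝ => lagPoly lam l (2*x)) (lagD lam l (2*r) * 2) r := by
    exact
      (lagPoly_hasDerivAt lam l (2*r)).comp r (two_mul_hasDerivAt r)
  have hy1 : HasDerivAt (fun x : ℝ => lagD lam l (2*x)) (lagD2 lam l (2*r) * 2) r := by
    exact
      (lagD_hasDerivAt lam l (2*r)).comp r (two_mul_hasDerivAt r)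
  have h := ((hy1.const_mul 2).sub hy).mul (exp_neg_hasDerivAt r)
  unfold phiF1 phiF2
  exact h.congr_deriv (by simp only [Pi.sub_apply]; ring)

lemma phiF_eigen (lam : ℝ) (hlam : lam > -1) (l : ℕ) (r : ℝ) :
    -(r * phiF2 lam l r) + r * phiF lam l r - (lam + 1) * phiF1 lam l r
      = (2 * l + lam + 1) * phiF lam l r := by
  have h := lag_ode lam hlam l (2*r)
  unfold phiF phiF1 phiF2
  linear_combination (-2 * Real.exp (-r)) * h

lemma phiF_cont (lam : ℝ) (l : ℕ) : Continuous (phiF lam l) := by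
  have : Differentiable ℝ (phiF lam l) := fun r => (phiF_hasDerivAt lam l r).differentiableAt
  exact this.continuous

lemma phiF1_cont (lam : ℝ) (l : ℕ) : Continuous (phiF1 lam l) := by
  have : Differentiable ℝ (phiF1 lam l) := fun r => (phiF1_hasDerivAt lam l r).differentiableAt
  exact this.continuous

private lemma phiF_eq (lam : ℝ) (l : ℕ) (r : ℝ) :
    phiF lam l r = lagPoly lam l (2*r) * Real.exp (-r) := rfl

lemma integrableOn_of_good (A : ℝ → ℝ) (R : ℝ)
    (hcont : ∀ r : ℝ, 0 < r → ContinuousAt A r)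
    (hlim : Tendsto A (𝓝[>] (0:ℝ)) (𝓝 0))
    (hvan : ∀ r : ℝ, R < r → A r = 0) :
    IntegrableOn A (Ioi (0:ℝ)) volume := by
  set Ab : ℝ → ℝ := fun r => if 0 < r then A r else 0 with hAb
  have hcont' : Continuous Ab := by
    rw [continuous_iff_continuousAt]
    intro x
    rcases lt_trichotomy x 0 with hx | rfl | hx
    · have he : Ab =ᶠ[𝓝 x] (fun _ => (0:ℝ)) := by
        filter_upwards [Iio_mem_nhds hx] with y hy
        simp [hAb, not_lt.mpr (le_of_lt (mem_Iio.mp hy))]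
      exact continuousAt_const.congr he.symm
    · unfold ContinuousAt
      have h0 : Ab 0 = 0 := by simp [hAb]
      rw [h0]
      have hdec : (𝓝 (0:ℝ)) = 𝓝[Iic 0] 0 ⊔ 𝓝[Ioi 0] 0 := by
        rw [← nhdsWithin_union, Iic_union_Ioi, nhdsWithin_univ]
      refine Tendsto.mono_left ?_ (le_of_eq hdec)
      rw [tendsto_sup]
      constructor
      · refine Tendsto.congr' ?_ tendsto_const_nhds
        filter_upwards [self_mem_nhdsWithin] with y hy
        simp [hAb, not_lt.mpr (mem_Iic.mp hy)]
      · refine Tendsto.congr' ?_ hlim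
        filter_upwards [self_mem_nhdsWithin] with y hy
        simp [hAb, mem_Ioi.mp hy]
    · have he : Ab =ᶠ[𝓝 x] A := by
        filter_upwards [Ioi_mem_nhds hx] with y hy
        simp [hAb, mem_Ioi.mp hy]
      exact (hcont x hx).congr he.symm
  have hsupp : HasCompactSupport Ab := by
    apply HasCompactSupport.intro (isCompact_Icc (a := (0:ℝ)) (b := max R 0))
    intro x hx
    simp only [mem_Icc, not_and_or, not_le] at hx
    rcases hx with hx | hx
    · simp [hAb, not_lt.mpr (le_of_lt hx)]
    · have hxR : R < x := lt_of_le_of_lt (le_max_left R 0) hx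
      by_cases h0 : 0 < x
      · simp [hAb, h0, hvan x hxR]
      · simp [hAb, h0]
  have hint : Integrable Ab volume := hcont'.integrable_of_hasCompactSupport hsupp
  refine hint.integrableOn.congr_fun ?_ measurableSet_Ioi
  intro r hr
  simp [hAb, mem_Ioi.mp hr]

/-- with `ψ_l(r) = r^m L_l^λ(2r) e^{−r}`, the deformed Laguerre operator
`L_{1,λ} g(r) = −r g″(r) + r g(r) − (λ+1) g′(r)` and `T f(r) = r^m L_{1,λ}(s ↦ s^{−m} f(s))(r)`,
every `f ∈ C_c^∞((0,∞))` satisfies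
`∫₀^∞ ψ_l f r^{λ−2m} dr = (2l+λ+1)⁻¹ ∫₀^∞ ψ_l (T f) r^{λ−2m} dr`. -/
theorem statement10 (lam : ℝ) (hlam : lam > -1) (m l : ℕ)
    (ψ : ℝ → ℝ) (hψ : ∀ r : ℝ, ψ r = r ^ m * lagPoly lam l (2 * r) * Real.exp (-r))
    (L1 : (ℝ → ℝ) → ℝ → ℝ)
    (hL1 : ∀ (g : ℝ → ℝ) (r : ℝ),
      L1 g r = -(r * deriv (deriv g) r) + r * g r - (lam + 1) * deriv g r)
    (T : (ℝ → ℝ) → ℝ → ℝ)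
    (hT : ∀ (f : ℝ → ℝ) (r : ℝ), T f r = r ^ m * L1 (fun s => f s / s ^ m) r)
    (f : ℝ → ℝ) (hf : ContDiff ℝ (⊤ : ℕ∞) f) (hsupp : HasCompactSupport f)
    (hfs : Function.support f ⊆ Set.Ioi 0) :
    ∫ r in Set.Ioi (0 : ℝ), ψ r * f r * r ^ (lam - 2 * m) =
      (2 * l + lam + 1)⁻¹ * ∫ r in Set.Ioi (0 : ℝ), ψ r * T f r * r ^ (lam - 2 * m) := by
  have hflam1 : (0:ℝ) < lam + 1 := by linarith
  -- smoothness infrastructure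
  have hf8 : ContDiff ℝ (⊤:ℕ∞) f := hf.of_le (by simp)
  have hf1 : ContDiff ℝ (⊤:ℕ∞) (deriv f) := (contDiff_infty_iff_deriv.mp hf8).2
  have hf2 : ContDiff ℝ (⊤:ℕ∞) (deriv (deriv f)) := (contDiff_infty_iff_deriv.mp hf1).2
  have hdf : ∀ x : ℝ, HasDerivAt f (deriv f x) x :=
    fun x => (hf8.differentiable (by simp) x).hasDerivAt
  have hdf1 : ∀ x : ℝ, HasDerivAt (deriv f) (deriv (deriv f) x) x :=
    fun x => (hf1.differentiable (by simp) x).hasDerivAt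
  have hf0 : ∀ x ≤ (0:ℝ), f x = 0 := by
    intro x hx
    by_contra h
    have := hfs (Function.mem_support.mpr h)
    rw [Set.mem_Ioi] at this; linarith
  have hf10 : ∀ x ≤ (0:ℝ), deriv f x = 0 := derivZero f hf8 hf0
  have hf20 : ∀ x ≤ (0:ℝ), deriv (deriv f) x = 0 := derivZero (deriv f) hf1 hf10
  -- support bound
  obtain ⟨R, hRsub⟩ := (hsupp : IsCompact (tsupport f)).isBounded.subset_closedBall 0
  have hfzR : ∀ x : ℝ, R < x → ∀ᶠ y in 𝓝 x, f y = 0 := by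
    intro x hx
    filter_upwards [Ioi_mem_nhds hx] with y hy
    apply image_eq_zero_of_notMem_tsupport
    intro hmem
    have := hRsub hmem
    rw [Metric.mem_closedBall, Real.dist_eq, sub_zero] at this
    have : y ≤ R := le_trans (le_abs_self y) this
    rw [Set.mem_Ioi] at hy
    linarith
  have hfz : ∀ x : ℝ, R < x → f x = 0 := fun x hx => (hfzR x hx).self_of_nhds
  have hf1z : ∀ x : ℝ, R < x → deriv f x = 0 := by
    intro x hx
    have : deriv f x = deriv (fun _ => (0:ℝ)) x := Filter.EventuallyEq.deriv_eq (hfzR x hx)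
    simpa using this
  have hf2z : ∀ x : ℝ, R < x → deriv (deriv f) x = 0 := by
    intro x hx
    have he : deriv f =ᶠ[𝓝 x] (fun _ => (0:ℝ)) := by
      filter_upwards [Ioi_mem_nhds hx] with y hy
      exact hf1z y hy
    have : deriv (deriv f) x = deriv (fun _ => (0:ℝ)) x := he.deriv_eq
    simpa using this
  -- the quotient function and its derivatives
  set g : ℝ → ℝ := fun s => f s / s ^ m with hgdef
  set g1 : ℝ → ℝ := fun r => (deriv f r * r - m * f r) / r ^ (m+1) with hg1def
  set g2 : ℝ → ℝ := fun r =>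
    ((deriv (deriv f) r * r + deriv f r - m * deriv f r) * r
      - ((m:ℝ)+1) * (deriv f r * r - m * f r)) / r ^ (m+2) with hg2def
  have hgd : ∀ r : ℝ, 0 < r → HasDerivAt g (g1 r) r := by
    intro r hr
    have hrm : (r:ℝ) ^ m ≠ 0 := pow_ne_zero m (ne_of_gt hr)
    have h := (hdf r).div (hasDerivAt_pow m r) hrm
    have heq : (deriv f r * r ^ m - f r * (↑m * r ^ (m - 1))) / (r ^ m) ^ 2 = g1 r := by
      rcases m with _ | k
      · simp only [hg1def, pow_zero, Nat.cast_zero, one_pow, zero_mul, mul_zero,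
          sub_zero, div_one, pow_one, zero_add]
        rw [eq_div_iff (ne_of_gt hr)]
        ring
      · simp only [hg1def, Nat.add_sub_cancel]
        rw [div_eq_div_iff (by positivity) (by positivity)]
        push_cast
        ring
    rw [hgdef]
    rw [heq] at h
    exact h
  have hg1d : ∀ r : ℝ, 0 < r → HasDerivAt g1 (g2 r) r := by
    intro r hr
    have hu : HasDerivAt (fun x => deriv f x * x - (m:ℝ) * f x)
        (deriv (deriv f) r * r + deriv f r * 1 - (m:ℝ) * deriv f r) r :=
      ((hdf1 r).mul (hasDerivAt_id r)).sub ((hdf r).const_mul (m:ℝ))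
    have h := hu.div (hasDerivAt_pow (m+1) r) (pow_ne_zero (m+1) (ne_of_gt hr))
    have heq : ((deriv (deriv f) r * r + deriv f r * 1 - (m:ℝ) * deriv f r) * r ^ (m+1)
          - (deriv f r * r - (m:ℝ) * f r) * (↑(m+1) * r ^ (m + 1 - 1))) / (r ^ (m+1)) ^ 2
        = g2 r := by
      simp only [hg2def, Nat.add_sub_cancel]
      rw [div_eq_div_iff (by positivity) (by positivity)]
      push_cast
      ring
    rw [hg1def]
    rw [heq] at h
    exact h
  have hderivg : ∀ r : ℝ, 0 < r → deriv g r = g1 r := fun r hr => (hgd r hr).deriv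
  have hderiv2g : ∀ r : ℝ, 0 < r → deriv (deriv g) r = g2 r := by
    intro r hr
    have he : deriv g =ᶠ[𝓝 r] g1 := by
      filter_upwards [Ioi_mem_nhds hr] with y hy
      exact hderivg y hy
    rw [he.deriv_eq]
    exact (hg1d r hr).deriv
  have hgz : ∀ r : ℝ, R < r → g r = 0 := by intro r hr; simp [hgdef, hfz r hr]
  have hg1z : ∀ r : ℝ, R < r → g1 r = 0 := by
    intro r hr; simp [hg1def, hfz r hr, hf1z r hr]
  have hg2z : ∀ r : ℝ, R < r → g2 r = 0 := by
    intro r hr; simp [hg2def, hfz r hr, hf1z r hr, hf2z r hr]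
  -- main auxiliary functions
  set A' : ℝ → ℝ := fun r => phiF lam l r * g r * r ^ lam with hA'def
  set B' : ℝ → ℝ := fun r =>
    phiF lam l r * (-(r * g2 r) + r * g r - (lam+1) * g1 r) * r ^ lam with hB'def
  set W : ℝ → ℝ := fun r =>
    r ^ (lam+1) * (phiF lam l r * g1 r - g r * phiF1 lam l r) with hWdef
  set W' : ℝ → ℝ := fun r =>
    (lam+1) * r ^ lam * (phiF lam l r * g1 r - g r * phiF1 lam l r)
      + r ^ (lam+1) * (phiF lam l r * g2 r - g r * phiF2 lam l r) with hW'def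
  have hWd : ∀ r : ℝ, 0 < r → HasDerivAt W (W' r) r := by
    intro r hr
    have hrp : HasDerivAt (fun x : ℝ => x ^ (lam+1)) ((lam+1) * r ^ lam) r := by
      have := Real.hasDerivAt_rpow_const (x := r) (p := lam+1) (Or.inl (ne_of_gt hr))
      simpa using this
    have hin : HasDerivAt (fun x => phiF lam l x * g1 x - g x * phiF1 lam l x)
        (phiF1 lam l r * g1 r + phiF lam l r * g2 r
          - (g1 r * phiF1 lam l r + g r * phiF2 lam l r)) r :=
      ((phiF_hasDerivAt lam l r).mul (hg1d r hr)).sub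
        ((hgd r hr).mul (phiF1_hasDerivAt lam l r))
    have h := hrp.mul hin
    rw [hWdef, hW'def]
    exact h.congr_deriv (by ring)
  have hW0 : W 0 = 0 := by
    simp [hWdef, Real.zero_rpow (ne_of_gt hflam1)]
  -- the key pointwise identity
  have hkey3 : ∀ r : ℝ, 0 < r → B' r = (2 * l + lam + 1) * A' r - W' r := by
    intro r hr
    have heig := phiF_eigen lam hlam l r
    have hpow2 : r ^ (lam+1) = r ^ lam * r := Real.rpow_add_one (ne_of_gt hr) lam
    simp only [hB'def, hA'def, hW'def]
    rw [hpow2]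
    linear_combination (r ^ lam * g r) * heig
  -- power juggling identities
  have hApow : ∀ r : ℝ, 0 < r → ψ r * f r * r ^ (lam - 2 * m) = A' r := by
    intro r hr
    have hpowE : r ^ (lam - 2 * (m:ℝ)) * r ^ ((m:ℝ)) * r ^ ((m:ℝ)) = r ^ lam := by
      rw [← Real.rpow_add hr, ← Real.rpow_add hr]
      congr 1
      ring
    have hfg : f r = g r * r ^ m := by
      rw [hgdef]
      field_simp
    rw [hψ, hfg]
    simp only [hA'def, phiF_eq]
    rw [← Real.rpow_natCast r m]
    linear_combination (lagPoly lam l (2*r) * Real.exp (-r) * g r) * hpowE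
  have hBpow : ∀ r : ℝ, 0 < r → ψ r * T f r * r ^ (lam - 2 * m) = B' r := by
    intro r hr
    have hpowE : r ^ (lam - 2 * (m:ℝ)) * r ^ ((m:ℝ)) * r ^ ((m:ℝ)) = r ^ lam := by
      rw [← Real.rpow_add hr, ← Real.rpow_add hr]
      congr 1
      ring
    rw [hψ, hT, hL1]
    rw [show deriv (deriv (fun s => f s / s ^ m)) r = g2 r from hderiv2g r hr]
    rw [show deriv (fun s => f s / s ^ m) r = g1 r from hderivg r hr]
    rw [show f r / r ^ m = g r from rfl]
    simp only [hB'def, phiF_eq]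
    rw [← Real.rpow_natCast r m]
    linear_combination (lagPoly lam l (2*r) * Real.exp (-r)
      * (-(r * g2 r) + r * g r - (lam+1) * g1 r)) * hpowE
  -- limits at 0+
  have hF0 := flatZero (m+2) f hf8 hf0
  have hF0' := flatZero (m+1) f hf8 hf0
  have hF1 := flatZero (m+1) (deriv f) hf1 hf10
  have hF2 := flatZero m (deriv (deriv f)) hf2 hf20
  have hrho : Tendsto (fun r : ℝ => r ^ (lam+1)) (𝓝[>] (0:ℝ)) (𝓝 0) := by
    have hc := (Real.continuousAt_rpow_const 0 (lam+1)
      (Or.inr (by linarith))).continuousWithinAt (s := Ioi (0:ℝ))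
    rw [ContinuousWithinAt, Real.zero_rpow (ne_of_gt hflam1)] at hc
    exact hc
  have hid : Tendsto (fun r : ℝ => r) (𝓝[>] (0:ℝ)) (𝓝 0) := by
    have : Tendsto (fun r : ℝ => r) (𝓝 (0:ℝ)) (𝓝 0) := by exact tendsto_id
    exact this.mono_left nhdsWithin_le_nhds
  have hphi0 : Tendsto (phiF lam l) (𝓝[>] (0:ℝ)) (𝓝 (phiF lam l 0)) :=
    (phiF_cont lam l).continuousAt.continuousWithinAt
  have hphi10 : Tendsto (phiF1 lam l) (𝓝[>] (0:ℝ)) (𝓝 (phiF1 lam l 0)) :=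
    (phiF1_cont lam l).continuousAt.continuousWithinAt
  have hAlim : Tendsto A' (𝓝[>] (0:ℝ)) (𝓝 0) := by
    have h1 : Tendsto (fun r => phiF lam l r * (f r / r ^ (m+1)) * r ^ (lam+1))
        (𝓝[>] (0:ℝ)) (𝓝 (phiF lam l 0 * 0 * 0)) := (hphi0.mul hF0').mul hrho
    rw [show phiF lam l 0 * 0 * 0 = 0 by ring] at h1
    refine Tendsto.congr' ?_ h1
    filter_upwards [self_mem_nhdsWithin] with r hr
    have hr0 : (0:ℝ) < r := hr
    have hpow2 : r ^ (lam+1) = r ^ lam * r := Real.rpow_add_one (ne_of_gt hr0) lam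
    simp only [hA'def, hgdef, hpow2]
    field_simp
    ring
  have hBlim : Tendsto B' (𝓝[>] (0:ℝ)) (𝓝 0) := by
    have h1 : Tendsto (fun r =>
        phiF lam l r * ((-(deriv (deriv f) r / r ^ m - 2*(m:ℝ) * (deriv f r / r ^ (m+1))
          + (m:ℝ)*((m:ℝ)+1) * (f r / r ^ (m+2)))
          + (f r / r ^ (m+2)) * (r * r)
          - (lam+1) * (deriv f r / r ^ (m+1) - (m:ℝ) * (f r / r ^ (m+2)))) * r ^ (lam+1)))
        (𝓝[>] (0:ℝ))
        (𝓝 (phiF lam l 0 * ((-(0 - 2*(m:ℝ) * 0 + (m:ℝ)*((m:ℝ)+1) * 0) + 0 * (0*0)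
          - (lam+1) * (0 - (m:ℝ) * 0)) * 0))) :=
      hphi0.mul (((((hF2.sub (hF1.const_mul (2*(m:ℝ)))).add
        (hF0.const_mul ((m:ℝ)*((m:ℝ)+1)))).neg.add
        (hF0.mul (hid.mul hid))).sub
        ((hF1.sub (hF0.const_mul (m:ℝ))).const_mul (lam+1))).mul hrho)
    simp only [mul_zero, zero_mul, sub_zero, zero_sub, neg_zero, add_zero, zero_add] at h1
    refine Tendsto.congr' ?_ h1
    filter_upwards [self_mem_nhdsWithin] with r hr
    have hr0 : (0:ℝ) < r := hr
    have hpow2 : r ^ (lam+1) = r ^ lam * r := Real.rpow_add_one (ne_of_gt hr0) lam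
    simp only [hB'def, hgdef, hg1def, hg2def, hpow2]
    field_simp
    ring
  have hWlim : Tendsto W (𝓝[>] (0:ℝ)) (𝓝 0) := by
    have t1 := hF1.sub (hF0.const_mul (m:ℝ))
    have t2 := (hphi0.mul t1).mul (hid.mul hrho)
    have t3 := (hphi10.mul hF0).mul ((hid.mul hid).mul hrho)
    have h1 := t2.sub t3
    simp only [mul_zero, zero_mul, sub_zero, zero_sub, neg_zero, add_zero, zero_add] at h1
    refine Tendsto.congr' ?_ h1
    filter_upwards [self_mem_nhdsWithin] with r hr
    have hr0 : (0:ℝ) < r := hr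
    have hpow2 : r ^ (lam+1) = r ^ lam * r := Real.rpow_add_one (ne_of_gt hr0) lam
    simp only [hWdef, hgdef, hg1def, hpow2]
    field_simp
    ring
  -- limits at infinity
  have hWtop : Tendsto W atTop (𝓝 (0:ℝ)) := by
    refine Tendsto.congr' ?_ tendsto_const_nhds
    filter_upwards [Filter.eventually_gt_atTop R] with r hr
    simp [hWdef, hg1z r hr, hgz r hr]
  -- integrability
  have hgc : ∀ r : ℝ, 0 < r → ContinuousAt g r :=
    fun r hr => (hgd r hr).differentiableAt.continuousAt
  have hg1c : ∀ r : ℝ, 0 < r → ContinuousAt g1 r :=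
    fun r hr => (hg1d r hr).differentiableAt.continuousAt
  have hg2c : ∀ r : ℝ, 0 < r → ContinuousAt g2 r := by
    intro r hr
    have hc1 : ContinuousAt f r := hf8.continuous.continuousAt
    have hc2 : ContinuousAt (deriv f) r := hf1.continuous.continuousAt
    have hc3 : ContinuousAt (deriv (deriv f)) r := hf2.continuous.continuousAt
    rw [hg2def]
    exact ((((hc3.mul continuousAt_id).add hc2).sub (hc2.const_mul (m:ℝ))).mul
      continuousAt_id |>.sub (((hc2.mul continuousAt_id).sub
      (hc1.const_mul (m:ℝ))).const_mul ((m:ℝ)+1))).div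
      (continuous_pow (m+2)).continuousAt (pow_ne_zero _ (ne_of_gt hr))
  have hA'cont : ∀ r : ℝ, 0 < r → ContinuousAt A' r := by
    intro r hr
    simp only [hA'def]
    exact ((phiF_cont lam l).continuousAt.mul (hgc r hr)).mul
      (Real.continuousAt_rpow_const r lam (Or.inl (ne_of_gt hr)))
  have hB'cont : ∀ r : ℝ, 0 < r → ContinuousAt B' r := by
    intro r hr
    simp only [hB'def]
    exact ((phiF_cont lam l).continuousAt.mul
      ((((continuousAt_id.mul (hg2c r hr)).neg).add (continuousAt_id.mul (hgc r hr))).sub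
        ((hg1c r hr).const_mul (lam+1)))).mul
      (Real.continuousAt_rpow_const r lam (Or.inl (ne_of_gt hr)))
  have hA'z : ∀ r : ℝ, R < r → A' r = 0 := by
    intro r hr; simp [hA'def, hgz r hr]
  have hB'z : ∀ r : ℝ, R < r → B' r = 0 := by
    intro r hr; simp [hB'def, hgz r hr, hg1z r hr, hg2z r hr]
  have hAint : IntegrableOn A' (Ioi (0:ℝ)) volume :=
    integrableOn_of_good A' R hA'cont hAlim hA'z
  have hBint : IntegrableOn B' (Ioi (0:ℝ)) volume :=
    integrableOn_of_good B' R hB'cont hBlim hB'z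
  have hW'int : IntegrableOn W' (Ioi (0:ℝ)) volume := by
    refine IntegrableOn.congr_fun ((hAint.const_mul (2 * l + lam + 1)).sub hBint)
      ?_ measurableSet_Ioi
    intro r hr
    simp only [Pi.sub_apply]
    have := hkey3 r hr
    linarith [this]
  -- FTC on (0, ∞)
  have hWcont0 : ContinuousWithinAt W (Ici (0:ℝ)) 0 := by
    have hdec : (Ici (0:ℝ)) = {0} ∪ Ioi 0 := by
      ext x
      simp only [mem_Ici, mem_union, mem_singleton_iff, mem_Ioi]
      constructor
      · intro h; rcases eq_or_lt_of_le h with h | h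
        · exact Or.inl h.symm
        · exact Or.inr h
      · rintro (rfl | h) <;> [exact le_rfl; exact le_of_lt h]
    unfold ContinuousWithinAt
    rw [hdec, nhdsWithin_union, tendsto_sup, nhdsWithin_singleton, hW0]
    exact ⟨by simpa [hW0] using tendsto_pure_nhds W 0, hWlim⟩
  have hFTC : ∫ r in Ioi (0:ℝ), W' r = 0 - W 0 :=
    integral_Ioi_of_hasDerivAt_of_tendsto hWcont0 (fun x hx => hWd x hx) hW'int hWtop
  rw [hW0, sub_zero] at hFTC
  -- assembly
  have hBeq : ∫ r in Ioi (0:ℝ), ψ r * T f r * r ^ (lam - 2 * m)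
      = (2 * l + lam + 1) * ∫ r in Ioi (0:ℝ), ψ r * f r * r ^ (lam - 2 * m) := by
    have e1 : ∫ r in Ioi (0:ℝ), ψ r * T f r * r ^ (lam - 2 * m)
        = ∫ r in Ioi (0:ℝ), ((2 * l + lam + 1) * A' r - W' r) := by
      refine setIntegral_congr_fun measurableSet_Ioi ?_
      intro r hr
      show ψ r * T f r * r ^ (lam - 2 * m) = (2 * l + lam + 1) * A' r - W' r
      rw [hBpow r hr, hkey3 r hr]
    have e2 : ∫ r in Ioi (0:ℝ), ψ r * f r * r ^ (lam - 2 * m)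
        = ∫ r in Ioi (0:ℝ), A' r := by
      refine setIntegral_congr_fun measurableSet_Ioi ?_
      intro r hr
      exact hApow r hr
    rw [e1, e2, integral_sub (hAint.const_mul _) hW'int, hFTC, sub_zero,
      MeasureTheory.integral_const_mul]
  rw [hBeq]
  have hcne : (2 * (l:ℝ) + lam + 1) ≠ 0 := by
    have : (0:ℝ) ≤ l := Nat.cast_nonneg l
    intro h; linarith
  rw [inv_mul_cancel_left₀ hcne]
end
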